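/- arXiv:2309.07806 — 11 statements merged into one kernel-verified Lean document; each statement's English description precedes it below -/
import Mathlib

section
/- Let f : Σ* → S and let Q ⊆ S^{Σ*} be finite nonempty with Λ_Q ≠ ∅. Then for every λ ∈ Λ_Q the weighted automaton H_{Q,λ} computes f; in particular, f is computed by a finite-state weighted automaton over S. -/
open scoped Classical

namespace LearnWA

variable {σ S : Type}

section Hankel

variable [Semiring S]

/-- The row of the Hankel matrix of `f` indexed by `v`: `⟨v⟩_w = f (v ++ w)`. -/
def row (f : List σ → S) (v : List σ) : List σ → S := fun w => f (v ++ w)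

/-- The column of the Hankel matrix of `f` indexed by `v`: `[v]_w = f (w ++ v)`. -/
def col (f : List σ → S) (v : List σ) : List σ → S := fun w => f (w ++ v)

/-- The right shift `x · u`, given by `(x · u)_w = x (u ++ w)`. -/
def shiftR (x : List σ → S) (u : List σ) : List σ → S := fun w => x (u ++ w)

/-- The left shift `u · x`, given by `(u · x)_w = x (w ++ u)`. -/
def shiftL (x : List σ → S) (u : List σ) : List σ → S := fun w => x (w ++ u)

/-- `x` is a finite left-linear combination of elements of `X`. -/
def LeftGenerated (X : Set (List σ → S)) (x : List σ → S) : Prop :=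
  ∃ (F : Finset (List σ → S)) (c : (List σ → S) → S),
    ↑F ⊆ X ∧ ∀ w, x w = ∑ y ∈ F, c y * y w

/-- `x` is a finite right-linear combination of elements of `X`. -/
def RightGenerated (X : Set (List σ → S)) (x : List σ → S) : Prop :=
  ∃ (F : Finset (List σ → S)) (c : (List σ → S) → S),
    ↑F ⊆ X ∧ ∀ w, x w = ∑ y ∈ F, y w * c y

def LeftClosed (X : Set (List σ → S)) : Prop :=
  ∀ x ∈ X, ∀ a : σ, LeftGenerated X (shiftR x [a])

def RightClosed (X : Set (List σ → S)) : Prop :=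
  ∀ x ∈ X, ∀ a : σ, RightGenerated X (shiftL x [a])

/-- every row of the Hankel matrix of `f` is left-generated by `X`. -/
def RowGenerating (f : List σ → S) (X : Set (List σ → S)) : Prop :=
  ∀ v : List σ, LeftGenerated X (row f v)

/-- every column of the Hankel matrix of `f` is right-generated by `X`. -/
def ColGenerating (f : List σ → S) (X : Set (List σ → S)) : Prop :=
  ∀ v : List σ, RightGenerated X (col f v)

/-- The left solution set `Λ_{Q,T}`. -/
def Lambda (f : List σ → S) (Q : Finset (List σ → S)) (T : Set (List σ)) :
    Set ((Q → S) × (Q → σ → Q → S)) :=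
  { lam |
    (∀ t ∈ T, f t = ∑ q : Q, lam.1 q * (q : List σ → S) t) ∧
    ∀ (q : Q) (a : σ), ∀ t ∈ T,
      (q : List σ → S) (a :: t) = ∑ p : Q, lam.2 q a p * (p : List σ → S) t }

/-- `Λ_{W,T}` for a finite set of words `W`: `Λ_{Q,T}` with `Q = {⟨w⟩ : w ∈ W}`. -/
noncomputable def LambdaW (f : List σ → S) (W : Finset (List σ)) (T : Set (List σ)) :=
  Lambda f (W.image (row f)) T

/-- The right solution set `Γ_{Q,T}` (here `T` is the finite set of vectors,
`Q ⊆ Σ*` the restriction set). -/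
def Gamma (f : List σ → S) (T : Finset (List σ → S)) (Q : Set (List σ)) :
    Set ((T → S) × (T → σ → T → S)) :=
  { gam |
    (∀ u ∈ Q, f u = ∑ t : T, (t : List σ → S) u * gam.1 t) ∧
    ∀ (t : T) (a : σ), ∀ u ∈ Q,
      (t : List σ → S) (u ++ [a]) = ∑ s : T, (s : List σ → S) u * gam.2 s a t }

/-- `Γ_{Q,W}` for a finite set of words `W`: `Γ_{Q,T}` with `T = {[w] : w ∈ W}`. -/
noncomputable def GammaW (f : List σ → S) (W : Finset (List σ)) (Q : Set (List σ)) :=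
  Gamma f (W.image (col f)) Q

/-- `f` is weakly guessable: there is a finite (nonempty) set `Q` of rows of its Hankel
matrix with `Λ_Q ≠ ∅`. -/
def WeaklyGuessable (f : List σ → S) : Prop :=
  ∃ Q : Finset (List σ → S), Q.Nonempty ∧ (∀ q ∈ Q, ∃ w, q = row f w) ∧
    (Lambda f Q Set.univ).Nonempty

/-- `f` is weakly co-guessable: there is a finite (nonempty) set `T` of columns of its
Hankel matrix with `Γ_T ≠ ∅`. -/
def WeaklyCoGuessable (f : List σ → S) : Prop :=
  ∃ T : Finset (List σ → S), T.Nonempty ∧ (∀ t ∈ T, ∃ w, t = col f w) ∧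
    (Gamma f T Set.univ).Nonempty

/-- `f` is guessable: there are finite (nonempty) sets of words `Q, T` with
`Λ_{Q,T} = Λ_Q ≠ ∅`. -/
def Guessable (f : List σ → S) : Prop :=
  ∃ (Q T : Finset (List σ)), Q.Nonempty ∧ T.Nonempty ∧
    LambdaW f Q ↑T = LambdaW f Q Set.univ ∧ (LambdaW f Q Set.univ).Nonempty

/-- `f` is co-guessable: there are finite (nonempty) sets of words `Q, T` with
`Γ_{Q,T} = Γ_T ≠ ∅`. -/
def CoGuessable (f : List σ → S) : Prop :=
  ∃ (Q T : Finset (List σ)), Q.Nonempty ∧ T.Nonempty ∧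
    GammaW f T ↑Q = GammaW f T Set.univ ∧ (GammaW f T Set.univ).Nonempty

/-- `f` is strongly guessable: guessable, and for every finite (nonempty) set of words `Q`
there is a finite (nonempty) set of words `T` with `Λ_{Q,T} = Λ_Q`. -/
def StronglyGuessable (f : List σ → S) : Prop :=
  Guessable f ∧ ∀ Q : Finset (List σ), Q.Nonempty →
    ∃ T : Finset (List σ), T.Nonempty ∧ LambdaW f Q ↑T = LambdaW f Q Set.univ

/-- `f` is strongly co-guessable. -/
def StronglyCoGuessable (f : List σ → S) : Prop :=
  CoGuessable f ∧ ∀ T : Finset (List σ), T.Nonempty →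
    ∃ Q : Finset (List σ), Q.Nonempty ∧ GammaW f T ↑Q = GammaW f T Set.univ

/-- A total `Q`-chain: an infinite strictly descending chain
`Λ_{Q,T 0} ⊋ Λ_{Q,T 1} ⊋ ⋯` with `T i ⊆ T (i+1)` and every word in some `T i`. -/
def TotalQChain (f : List σ → S) (Q : Finset (List σ)) (T : ℕ → Set (List σ)) : Prop :=
  (∀ i, T i ⊆ T (i + 1)) ∧ (∀ w : List σ, ∃ i, w ∈ T i) ∧
    ∀ i, LambdaW f Q (T (i + 1)) ⊂ LambdaW f Q (T i)

/-- `f` is row-bound: there is a finite (nonempty) set of words `Q` with `Λ_Q ≠ ∅`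
and no total `Q`-chain. -/
def RowBound (f : List σ → S) : Prop :=
  ∃ Q : Finset (List σ), Q.Nonempty ∧ (LambdaW f Q Set.univ).Nonempty ∧
    ∀ T : ℕ → Set (List σ), ¬ TotalQChain f Q T

/-- `f` is strongly row-bound: for every finite (nonempty) set of words `Q` there is
no total `Q`-chain. -/
def StronglyRowBound (f : List σ → S) : Prop :=
  ∀ Q : Finset (List σ), Q.Nonempty → ∀ T : ℕ → Set (List σ), ¬ TotalQChain f Q T

/-- `f` satisfies the weak ascending chain condition. -/
def WeakACC (f : List σ → S) : Prop :=
  ∀ X : ℕ → Submodule S (List σ → S),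
    (∀ i, X i ≤ X (i + 1)) →
    (∀ i, ∃ R : Finset (List σ), X i = Submodule.span S (↑(R.image (row f)) : Set (List σ → S))) →
    (∀ v : List σ, ∃ i, row f v ∈ X i) →
    ∃ n, ∀ m ≥ n, X m = X n

end Hankel

/-- The mirror of `f`. -/
def mirror (f : List σ → S) : List σ → S := fun w => f w.reverse

/-- A finite-state weighted automaton over the alphabet `σ` with weights in `S`. -/
structure WAuto (σ S : Type) where
  State : Type
  [instFintype : Fintype State]
  init : State → S
  trans : σ → State → State → S
  final : State → S

attribute [instance] WAuto.instFintype

variable [Semiring S]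

/-- `A.run w q` is the value `(M(w) η)_q`, i.e. the value computed by `A` on `w` when
started at `q` with initial weight `1`. -/
def WAuto.run (A : WAuto σ S) : List σ → A.State → S
  | [], q => A.final q
  | a :: w, q => ∑ p : A.State, A.trans a q p * WAuto.run A w p

/-- `A` computes `f`: for every word `w`, `f w = α M(w) η`. -/
def WAuto.Computes (A : WAuto σ S) (f : List σ → S) : Prop :=
  ∀ w : List σ, f w = ∑ q : A.State, A.init q * A.run w q

/-- The (Hankel/hypothesis) automaton `H_{Q,λ}` built from a solution `λ`. -/
def hypAut (f : List σ → S) (Q : Finset (List σ → S))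
    (lam : (Q → S) × (Q → σ → Q → S)) : WAuto σ S where
  State := Q
  init := lam.1
  trans := fun a q p => lam.2 q a p
  final := fun q => (q : List σ → S) []

/-- `A.IsRun p w l`: `l` is the list of states successively visited by a run of `A`
on the word `w` starting at `p` (all transitions used have nonzero weight). -/
def WAuto.IsRun (A : WAuto σ S) : A.State → List σ → List A.State → Prop
  | _, [], l => l = []
  | p, a :: w, l => ∃ q l', l = q :: l' ∧ A.trans a p q ≠ 0 ∧ WAuto.IsRun A q w l'

/-- all transitions along the run have weight `1`. -/
def WAuto.RunWeightsOne (A : WAuto σ S) : A.State → List σ → List A.State → Prop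
  | _, [], _ => True
  | p, a :: w, l => ∃ q l', l = q :: l' ∧ A.trans a p q = 1 ∧ WAuto.RunWeightsOne A q w l'

/-- `A` is literal: it has a unique initial state with weight `1`, and there is a
prefix-closed set of words `W` and a bijection `b` from the states onto `W` such that for
every state `q` there is a unique run from the initial state labelled `b q`, every
transition of this run has weight `1`, and the run terminates at `q`. -/
def WAuto.Literal (A : WAuto σ S) : Prop :=
  ∃ q0 : A.State, A.init q0 = 1 ∧ (∀ q, q ≠ q0 → A.init q = 0) ∧
    ∃ (W : Set (List σ)) (b : A.State → List σ),
      (∀ w ∈ W, ∀ u, u <+: w → u ∈ W) ∧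
      Function.Injective b ∧ Set.range b = W ∧
      ∀ q : A.State,
        (∃! l : List A.State, A.IsRun q0 (b q) l) ∧
        ∀ l : List A.State, A.IsRun q0 (b q) l →
          A.RunWeightsOne q0 (b q) l ∧ (q0 :: l).getLast (List.cons_ne_nil _ _) = q

end LearnWA

open LearnWA

theorem statement3 {σ S : Type} [Fintype σ] [Semiring S] (f : List σ → S)
    (Q : Finset (List σ → S)) (hQ : Q.Nonempty)
    (h : (Lambda f Q Set.univ).Nonempty) :
    (∀ lam ∈ Lambda f Q Set.univ, (hypAut f Q lam).Computes f) ∧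
      ∃ A : WAuto σ S, A.Computes f := by
  have main : ∀ lam ∈ Lambda f Q Set.univ, (hypAut f Q lam).Computes f := by
    rintro lam ⟨h1, h2⟩ w
    have hrun : ∀ (w : List σ) (q : Q), (hypAut f Q lam).run w q = (q : List σ → S) w := by
      intro w
      induction w with
      | nil => intro q; rfl
      | cons a w ih =>
        intro q
        have : (hypAut f Q lam).run (a :: w) q =
            ∑ p : Q, lam.2 q a p * (hypAut f Q lam).run w p := rfl
        rw [this]
        simp only [ih]
        exact (h2 q a w trivial).symm
    calc f w = ∑ q : Q, lam.1 q * (q : List σ → S) w := h1 w trivial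
      _ = ∑ q : Q, (hypAut f Q lam).init q * (hypAut f Q lam).run w q := by
          exact Finset.sum_congr rfl fun q _ => by rw [hrun]; rfl
  refine ⟨main, ?_⟩
  obtain ⟨lam, hlam⟩ := h
  exact ⟨hypAut f Q lam, main lam hlam⟩
end

section
/- For f : Σ* → S the following are equivalent: (1) f is computed by a finite-state weighted automaton over S; (2) there is a finite left-closed set X ⊆ S^{Σ*} such that every row of the Hankel matrix of f is left-generated by X; (3) there is a finite right-closed set Y ⊆ S^{Σ*} such that every column of the Hankel matrix of f is right-generated by Y. -/
open scoped Classical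

open LearnWA

namespace Statement5Aux

variable {σ S M Q : Type} [Semiring S]

lemma fiber_left [Fintype Q] (g : Q → M) (coeff : Q → S) (h : M → S) :
    ∑ y ∈ Finset.image g Finset.univ,
      (∑ q ∈ Finset.univ.filter (fun q => g q = y), coeff q) * h y
      = ∑ q, coeff q * h (g q) := by
  calc ∑ y ∈ Finset.image g Finset.univ,
      (∑ q ∈ Finset.univ.filter (fun q => g q = y), coeff q) * h y
      = ∑ y ∈ Finset.image g Finset.univ,
        ∑ q ∈ Finset.univ.filter (fun q => g q = y), coeff q * h (g q) := by
        refine Finset.sum_congr rfl fun y _ => ?_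
        rw [Finset.sum_mul]
        exact Finset.sum_congr rfl fun q hq => by
          rw [(Finset.mem_filter.1 hq).2]
    _ = ∑ q, coeff q * h (g q) :=
        Finset.sum_fiberwise_of_maps_to
          (fun q _ => Finset.mem_image_of_mem g (Finset.mem_univ q)) _

lemma fiber_right [Fintype Q] (g : Q → M) (coeff : Q → S) (h : M → S) :
    ∑ y ∈ Finset.image g Finset.univ,
      h y * (∑ q ∈ Finset.univ.filter (fun q => g q = y), coeff q)
      = ∑ q, h (g q) * coeff q := by
  calc ∑ y ∈ Finset.image g Finset.univ,
      h y * (∑ q ∈ Finset.univ.filter (fun q => g q = y), coeff q)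
      = ∑ y ∈ Finset.image g Finset.univ,
        ∑ q ∈ Finset.univ.filter (fun q => g q = y), h (g q) * coeff q := by
        refine Finset.sum_congr rfl fun y _ => ?_
        rw [Finset.mul_sum]
        exact Finset.sum_congr rfl fun q hq => by
          rw [(Finset.mem_filter.1 hq).2]
    _ = ∑ q, h (g q) * coeff q :=
        Finset.sum_fiberwise_of_maps_to
          (fun q _ => Finset.mem_image_of_mem g (Finset.mem_univ q)) _

lemma sum_subtype_ite (X F : Finset M) (hF : F ⊆ X) (g : M → S) :
    ∑ p : {x // x ∈ X}, (if p.1 ∈ F then g p.1 else 0) = ∑ p ∈ F, g p := by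
  rw [Finset.sum_coe_sort X (fun p => if p ∈ F then g p else 0),
    Finset.sum_ite_mem, Finset.inter_eq_right.2 hF]

/-- front run: value of `α M(w)` at state `q`, via the reversed word. -/
def runLAux (A : WAuto σ S) : List σ → A.State → S
  | [], q => A.init q
  | a :: r, q => ∑ p, runLAux A r p * A.trans a p q

def runL (A : WAuto σ S) (w : List σ) (q : A.State) : S := runLAux A w.reverse q

lemma runL_nil (A : WAuto σ S) (q : A.State) : runL A [] q = A.init q := rfl

lemma runL_snoc (A : WAuto σ S) (w : List σ) (a : σ) (q : A.State) :
    runL A (w ++ [a]) q = ∑ p, runL A w p * A.trans a p q := by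
  simp [runL, runLAux]

lemma bridge (A : WAuto σ S) (u : List σ) :
    ∀ v, ∑ q, runL A u q * A.run v q = ∑ q, A.init q * A.run (u ++ v) q := by
  induction u using List.reverseRecOn with
  | nil => intro v; simp [runL_nil]
  | append_singleton u a ih =>
    intro v
    rw [show (u ++ [a]) ++ v = u ++ (a :: v) by simp, ← ih (a :: v)]
    simp only [runL_snoc, Finset.sum_mul, WAuto.run, Finset.mul_sum, mul_assoc]
    exact Finset.sum_comm

end Statement5Aux

section Main

open Statement5Aux

variable {σ S : Type} [Semiring S]

lemma auto_to_left (f : List σ → S) (A : WAuto σ S) (hA : A.Computes f) :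
    ∃ X : Finset (List σ → S), LeftClosed (↑X : Set (List σ → S)) ∧ RowGenerating f ↑X := by
  classical
  set g : A.State → (List σ → S) := fun q w => A.run w q with hg
  refine ⟨Finset.image g Finset.univ, ?_, ?_⟩
  · intro x hx a
    obtain ⟨q, -, rfl⟩ := Finset.mem_image.1 (Finset.mem_coe.1 hx)
    refine ⟨Finset.image g Finset.univ,
      fun y => ∑ p ∈ Finset.univ.filter (fun p => g p = y), A.trans a q p,
      subset_rfl, fun w => ?_⟩
    rw [fiber_left g (fun p => A.trans a q p) (fun y => y w)]
    show A.run (a :: w) q = _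
    simp [WAuto.run, hg]
  · intro v
    refine ⟨Finset.image g Finset.univ,
      fun y => ∑ p ∈ Finset.univ.filter (fun p => g p = y), runL A v p,
      subset_rfl, fun w => ?_⟩
    rw [fiber_left g (fun p => runL A v p) (fun y => y w)]
    show f (v ++ w) = _
    rw [hA (v ++ w), ← bridge A v w]

lemma left_to_auto (f : List σ → S) (X : Finset (List σ → S))
    (hcl : LeftClosed (↑X : Set (List σ → S))) (hgen : RowGenerating f ↑X) :
    ∃ A : WAuto σ S, A.Computes f := by
  classical
  have hcl' : ∀ (x : {y // y ∈ X}) (a : σ), ∃ (F : Finset (List σ → S)) (c : (List σ → S) → S),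
      ↑F ⊆ (↑X : Set (List σ → S)) ∧ ∀ w, shiftR x.1 [a] w = ∑ y ∈ F, c y * y w :=
    fun x a => hcl x.1 (Finset.mem_coe.2 x.2) a
  choose F c hFsub hc using hcl'
  obtain ⟨F0, c0, hF0, hc0⟩ := hgen []
  let A : WAuto σ S :=
    { State := {x // x ∈ X}
      init := fun q => if q.1 ∈ F0 then c0 q.1 else 0
      trans := fun a q p => if p.1 ∈ F q a then c q a p.1 else 0
      final := fun q => q.1 [] }
  have hrun : ∀ (w : List σ) (q : {x // x ∈ X}), A.run w q = q.1 w := by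
    intro w
    induction w with
    | nil => intro q; rfl
    | cons a w ih =>
      intro q
      show ∑ p : {x // x ∈ X}, A.trans a q p * A.run w p = _
      simp only [ih]
      show ∑ p : {x // x ∈ X}, (if p.1 ∈ F q a then c q a p.1 else 0) * p.1 w = _
      simp only [ite_mul, zero_mul]
      rw [sum_subtype_ite X (F q a) (Finset.coe_subset.1 (hFsub q a)) (fun p => c q a p * p w)]
      exact (hc q a w).symm
  refine ⟨A, fun w => ?_⟩
  have h0 : f w = ∑ y ∈ F0, c0 y * y w := hc0 w
  rw [h0, ← sum_subtype_ite X F0 (Finset.coe_subset.1 hF0) (fun y => c0 y * y w)]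
  refine Finset.sum_congr rfl fun q _ => ?_
  rw [hrun w q]
  show _ = (if q.1 ∈ F0 then c0 q.1 else 0) * q.1 w
  simp only [ite_mul, zero_mul]

lemma auto_to_right (f : List σ → S) (A : WAuto σ S) (hA : A.Computes f) :
    ∃ Y : Finset (List σ → S), RightClosed (↑Y : Set (List σ → S)) ∧ ColGenerating f ↑Y := by
  classical
  set g : A.State → (List σ → S) := fun q w => runL A w q with hg
  refine ⟨Finset.image g Finset.univ, ?_, ?_⟩
  · intro x hx a
    obtain ⟨q, -, rfl⟩ := Finset.mem_image.1 (Finset.mem_coe.1 hx)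
    refine ⟨Finset.image g Finset.univ,
      fun y => ∑ p ∈ Finset.univ.filter (fun p => g p = y), A.trans a p q,
      subset_rfl, fun w => ?_⟩
    rw [fiber_right g (fun p => A.trans a p q) (fun y => y w)]
    show runL A (w ++ [a]) q = _
    rw [runL_snoc]
  · intro v
    refine ⟨Finset.image g Finset.univ,
      fun y => ∑ p ∈ Finset.univ.filter (fun p => g p = y), A.run v p,
      subset_rfl, fun w => ?_⟩
    rw [fiber_right g (fun p => A.run v p) (fun y => y w)]
    show f (w ++ v) = _
    rw [hA (w ++ v), ← bridge A w v]

lemma right_to_auto (f : List σ → S) (Y : Finset (List σ → S))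
    (hcl : RightClosed (↑Y : Set (List σ → S))) (hgen : ColGenerating f ↑Y) :
    ∃ A : WAuto σ S, A.Computes f := by
  classical
  have hcl' : ∀ (y : {z // z ∈ Y}) (a : σ), ∃ (G : Finset (List σ → S)) (d : (List σ → S) → S),
      ↑G ⊆ (↑Y : Set (List σ → S)) ∧ ∀ w, shiftL y.1 [a] w = ∑ z ∈ G, z w * d z :=
    fun y a => hcl y.1 (Finset.mem_coe.2 y.2) a
  choose G d hGsub hd using hcl'
  obtain ⟨F0, c0, hF0, hc0⟩ := hgen []
  let A : WAuto σ S :=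
    { State := {y // y ∈ Y}
      init := fun q => q.1 []
      trans := fun a p q => if p.1 ∈ G q a then d q a p.1 else 0
      final := fun q => if q.1 ∈ F0 then c0 q.1 else 0 }
  have hrunL : ∀ (u : List σ) (q : {y // y ∈ Y}), runL A u q = q.1 u := by
    intro u
    induction u using List.reverseRecOn with
    | nil => intro q; rfl
    | append_singleton u a ih =>
      intro q
      rw [runL_snoc]
      simp only [ih]
      show ∑ p : {y // y ∈ Y}, p.1 u * (if p.1 ∈ G q a then d q a p.1 else 0) = _
      simp only [mul_ite, mul_zero]
      rw [sum_subtype_ite Y (G q a) (Finset.coe_subset.1 (hGsub q a)) (fun p => p u * d q a p)]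
      exact (hd q a u).symm
  refine ⟨A, fun u => ?_⟩
  have h1 := bridge A u []
  simp only [List.append_nil] at h1
  have h2 : f u = ∑ y ∈ F0, y u * c0 y := by
    have := hc0 u
    simpa [col] using this
  rw [h2, ← sum_subtype_ite Y F0 (Finset.coe_subset.1 hF0) (fun y => y u * c0 y), ← h1]
  refine Finset.sum_congr rfl fun q _ => ?_
  rw [hrunL u q]
  show (if q.1 ∈ F0 then q.1 u * c0 q.1 else 0) = q.1 u * A.run [] q
  show _ = q.1 u * (if q.1 ∈ F0 then c0 q.1 else 0)
  simp only [mul_ite, mul_zero]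

end Main


theorem statement5 {σ S : Type} [Fintype σ] [Semiring S] (f : List σ → S) :
    ((∃ A : WAuto σ S, A.Computes f) ↔
      ∃ X : Finset (List σ → S), LeftClosed (↑X : Set (List σ → S)) ∧
        RowGenerating f ↑X) ∧
    ((∃ A : WAuto σ S, A.Computes f) ↔
      ∃ Y : Finset (List σ → S), RightClosed (↑Y : Set (List σ → S)) ∧
        ColGenerating f ↑Y) := by
  constructor
  · exact ⟨fun ⟨A, hA⟩ => auto_to_left f A hA,
      fun ⟨X, hcl, hgen⟩ => left_to_auto f X hcl hgen⟩
  · exact ⟨fun ⟨A, hA⟩ => auto_to_right f A hA,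
      fun ⟨Y, hcl, hgen⟩ => right_to_auto f Y hcl hgen⟩
end

section
/- A function f : Σ* → S is weakly guessable if and only if there exists a finite set of rows of the Hankel matrix of f that is row-generating for f. -/
open scoped Classical

open LearnWA


lemma sum_swap_aux {S : Type} [Semiring S] {ι : Type} [Fintype ι]
    (A : ι → S) (B : ι → ι → S) (C : ι → S) :
    ∑ q : ι, A q * ∑ r : ι, B q r * C r = ∑ r : ι, (∑ q : ι, A q * B q r) * C r := by
  simp only [Finset.mul_sum, Finset.sum_mul, ← mul_assoc]
  rw [Finset.sum_comm]

lemma gen_extend {σ S : Type} [Semiring S] (Q : Finset (List σ → S)) (x : List σ → S)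
    (h : LeftGenerated (↑Q : Set (List σ → S)) x) :
    ∃ c : Q → S, ∀ w, x w = ∑ q : Q, c q * (q : List σ → S) w := by
  obtain ⟨F, c, hF, hsum⟩ := h
  have hFQ : F ⊆ Q := Finset.coe_subset.mp hF
  refine ⟨fun q => if (q : List σ → S) ∈ F then c q else 0, fun w => ?_⟩
  calc x w = ∑ y ∈ F, c y * y w := hsum w
    _ = ∑ y ∈ F, (if y ∈ F then c y else 0) * y w :=
        Finset.sum_congr rfl fun y hy => by rw [if_pos hy]
    _ = ∑ y ∈ Q, (if y ∈ F then c y else 0) * y w :=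
        Finset.sum_subset hFQ (fun y _ hy => by rw [if_neg hy, zero_mul])
    _ = ∑ q : Q, (if (q : List σ → S) ∈ F then c q else 0) * (q : List σ → S) w :=
        (Finset.sum_coe_sort Q (fun y => (if y ∈ F then c y else 0) * y w)).symm

lemma shift_coeffs {σ S : Type} [Semiring S] (f : List σ → S) (Q : Finset (List σ → S))
    (lam : (Q → S) × (Q → σ → Q → S)) (hlam : lam ∈ Lambda f Q Set.univ) :
    ∀ (v : List σ) (x : Q), ∃ c : Q → S,
      ∀ w, (x : List σ → S) (v ++ w) = ∑ p : Q, c p * (p : List σ → S) w := by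
  intro v
  induction v with
  | nil =>
    intro x
    refine ⟨fun p => if p = x then 1 else 0, fun w => ?_⟩
    simp
  | cons a v ih =>
    intro x
    choose c hc using ih
    refine ⟨fun r => ∑ p : Q, lam.2 x a p * c p r, fun w => ?_⟩
    have h1 : (x : List σ → S) (a :: (v ++ w))
        = ∑ p : Q, lam.2 x a p * (p : List σ → S) (v ++ w) :=
      hlam.2 x a (v ++ w) trivial
    calc (x : List σ → S) ((a :: v) ++ w)
        = ∑ p : Q, lam.2 x a p * (p : List σ → S) (v ++ w) := h1
      _ = ∑ p : Q, lam.2 x a p * ∑ r : Q, c p r * (r : List σ → S) w :=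
          Finset.sum_congr rfl fun p _ => by rw [hc p w]
      _ = ∑ r : Q, (∑ p : Q, lam.2 x a p * c p r) * (r : List σ → S) w :=
          sum_swap_aux _ _ _

theorem statement6 {σ S : Type} [Fintype σ] [Semiring S] (f : List σ → S) :
    WeaklyGuessable f ↔
      ∃ Q : Finset (List σ → S), (∀ q ∈ Q, ∃ w : List σ, q = row f w) ∧
        RowGenerating f ↑Q := by
  constructor
  · rintro ⟨Q, hne, hrows, lam, hlam⟩
    refine ⟨Q, hrows, fun v => ?_⟩
    choose c hc using shift_coeffs f Q lam hlam v
    refine ⟨Q, fun y => if h : y ∈ Q then ∑ q : Q, lam.1 q * c q ⟨y, h⟩ else 0,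
      subset_rfl, fun w => ?_⟩
    rw [← Finset.sum_coe_sort Q]
    calc row f v w = ∑ q : Q, lam.1 q * (q : List σ → S) (v ++ w) := hlam.1 (v ++ w) trivial
      _ = ∑ q : Q, lam.1 q * ∑ r : Q, c q r * (r : List σ → S) w :=
          Finset.sum_congr rfl fun q _ => by rw [hc q w]
      _ = ∑ r : Q, (∑ q : Q, lam.1 q * c q r) * (r : List σ → S) w := sum_swap_aux _ _ _
      _ = ∑ r : Q, (if h : (r : List σ → S) ∈ Q then ∑ q : Q, lam.1 q * c q ⟨↑r, h⟩ else 0)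
            * (r : List σ → S) w := by
          refine Finset.sum_congr rfl fun r _ => ?_
          rw [dif_pos r.2]
  · rintro ⟨Q, hrows, hgen⟩
    by_cases hQ : Q.Nonempty
    · have hrow0 : row f [] = f := funext fun w => rfl
      obtain ⟨c0, hc0⟩ := gen_extend Q f (hrow0 ▸ hgen [])
      have h2 : ∀ (q : Q) (a : σ), ∃ c : Q → S,
          ∀ t, (q : List σ → S) (a :: t) = ∑ p : Q, c p * (p : List σ → S) t := by
        intro q a
        obtain ⟨w0, hw0⟩ := hrows ↑q q.2
        obtain ⟨c, hc⟩ := gen_extend Q (row f (w0 ++ [a])) (hgen _)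
        refine ⟨c, fun t => ?_⟩
        have he : (q : List σ → S) (a :: t) = row f (w0 ++ [a]) t := by
          rw [hw0]
          simp [row, List.append_assoc]
        rw [he, hc]
      choose c2 hc2 using h2
      exact ⟨Q, hQ, hrows,
        ⟨(c0, c2), fun t _ => hc0 t, fun q a t _ => hc2 q a t⟩⟩
    · rw [Finset.not_nonempty_iff_eq_empty] at hQ
      subst hQ
      have hf : ∀ w, f w = 0 := by
        intro w
        obtain ⟨F, c, hF, hsum⟩ := hgen []
        have hFe : F = ∅ := Finset.subset_empty.mp (by simpa using hF)
        subst hFe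
        simpa [row] using hsum w
      refine ⟨{f}, Finset.singleton_nonempty f, ?_, ⟨(0, 0), ?_, ?_⟩⟩
      · intro q hq
        rw [Finset.mem_singleton] at hq
        exact ⟨[], by rw [hq]; exact funext fun w => rfl⟩
      · intro t _
        simp [hf]
      · intro q a t _
        have hq : (q : List σ → S) = f := Finset.mem_singleton.mp q.2
        simp [hq, hf]
end

section
/- A function f : Σ* → S is weakly guessable if and only if there exists a literal weighted automaton over S computing f. -/
open scoped Classical

open LearnWA

namespace LearnWAProof

open Finset

variable {σ S : Type} [Semiring S]

/-- If there is no run of `u` from `p`, then `run (u ++ w) p = 0`. -/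
lemma run_zero (A : WAuto σ S) :
    ∀ (u : List σ) (p : A.State), (∀ l, ¬ A.IsRun p u l) → ∀ w, A.run (u ++ w) p = 0
  | [], _, h, _ => absurd rfl (h [])
  | a :: u, p, h, w => by
    show (∑ r : A.State, A.trans a p r * A.run (u ++ w) r) = 0
    refine Finset.sum_eq_zero fun r _ => ?_
    by_cases h0 : A.trans a p r = 0
    · rw [h0, zero_mul]
    · rw [run_zero A u r (fun l hl => h (r :: l) ⟨r, l, rfl, h0, hl⟩) w, mul_zero]

/-- If `l` is the unique run of `u` from `p`, with all weights one, then
`run (u ++ w) p = run w (endpoint)`. -/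
lemma run_shift (A : WAuto σ S) (h1 : (1 : S) ≠ 0) :
    ∀ (u : List σ) (p : A.State) (l : List A.State),
      (∀ l', A.IsRun p u l' → l' = l) → A.IsRun p u l → A.RunWeightsOne p u l →
      ∀ w, A.run (u ++ w) p = A.run w ((p :: l).getLast (List.cons_ne_nil _ _))
  | [], p, l, _, hrun, _, w => by
    have : l = [] := hrun
    subst this
    rfl
  | a :: u, p, l, huniq, hrun, hrwo, w => by
    obtain ⟨q, l₁, rfl, hne, hr⟩ := hrun
    obtain ⟨q₂, l₂, heq, hw1, hrwo₂⟩ := hrwo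
    obtain ⟨rfl, rfl⟩ := List.cons_eq_cons.mp heq
    have huniq' : ∀ l', A.IsRun q u l' → l' = l₁ := by
      intro l' hl'
      have := huniq (q :: l') ⟨q, l', rfl, by rw [hw1]; exact h1, hl'⟩
      exact (List.cons_eq_cons.mp this).2
    show (∑ r : A.State, A.trans a p r * A.run (u ++ w) r) = _
    rw [Finset.sum_eq_single q]
    · rw [hw1, one_mul, run_shift A h1 u q l₁ huniq' hr hrwo₂ w,
        List.getLast_cons (List.cons_ne_nil _ _)]
    · intro r _ hrq
      by_cases h0 : A.trans a p r = 0
      · rw [h0, zero_mul]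
      · rw [run_zero A u r ?_ w, mul_zero]
        intro l' hl'
        have := huniq (r :: l') ⟨r, l', rfl, h0, hl'⟩
        exact hrq (List.cons_eq_cons.mp this).1
    · intro h; exact absurd (Finset.mem_univ q) h

/-- propagation of left-linear-combination coefficients under right shifts. -/
lemma coeff_prop {Q : Finset (List σ → S)} (μ : Q → σ → Q → S)
    (hμ : ∀ (q : Q) (a : σ) (t : List σ),
      (q : List σ → S) (a :: t) = ∑ p : Q, μ q a p * (p : List σ → S) t) :
    ∀ (w : List σ) (d : Q → S) (g : List σ → S),
      (∀ t, g t = ∑ q : Q, d q * (q : List σ → S) t) →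
      ∀ t, g (w ++ t) =
        ∑ q : Q, (w.foldl (fun d a q => ∑ p : Q, d p * μ p a q) d) q * (q : List σ → S) t
  | [], _, _, hg, t => hg t
  | a :: w, d, g, hg, t => by
    have hg' : ∀ t, g (a :: t) = ∑ q : Q, (∑ p : Q, d p * μ p a q) * (q : List σ → S) t := by
      intro t
      rw [hg (a :: t)]
      calc (∑ q : Q, d q * (q : List σ → S) (a :: t))
          = ∑ q : Q, ∑ p : Q, d q * μ q a p * ((p : List σ → S) t) := by
            refine Finset.sum_congr rfl fun q _ => ?_
            rw [hμ q a t, Finset.mul_sum]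
            exact Finset.sum_congr rfl fun p _ => (mul_assoc _ _ _).symm
        _ = ∑ p : Q, ∑ q : Q, d q * μ q a p * ((p : List σ → S) t) := Finset.sum_comm
        _ = ∑ p : Q, (∑ q : Q, d q * μ q a p) * (p : List σ → S) t := by
            refine Finset.sum_congr rfl fun p _ => ?_
            rw [Finset.sum_mul]
    exact coeff_prop μ hμ w _ (fun t => g (a :: t)) hg' t

end LearnWAProof

namespace LearnWAProof

open Finset

variable {σ S : Type} [Semiring S]

/-- The tree-shaped literal automaton on a prefix-closed finite set of words `W`. -/
noncomputable def treeAut (f : List σ → S) (W : Finset (List σ)) (hnil : [] ∈ W)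
    (E : List σ → σ → {w // w ∈ W} → S) : WAuto σ S where
  State := {w // w ∈ W}
  instFintype := FinsetCoe.fintype W
  init := fun q => if q = ⟨[], hnil⟩ then 1 else 0
  trans := fun a p u =>
    if (p : List σ) ++ [a] ∈ W then (if (u : List σ) = (p : List σ) ++ [a] then 1 else 0)
    else E (p : List σ) a u
  final := fun p => f (p : List σ)

variable {f : List σ → S} {W : Finset (List σ)} {hnil : [] ∈ W}
  {E : List σ → σ → {w // w ∈ W} → S}

lemma treeAut_run
    (hE : ∀ (w : List σ) (a : σ) (t : List σ),
      (∑ u : {w // w ∈ W}, E w a u * f ((u : List σ) ++ t)) = f (w ++ a :: t)) :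
    ∀ (t : List σ) (p : {w // w ∈ W}), (treeAut f W hnil E).run t p = f ((p : List σ) ++ t)
  | [], p => by show f (p : List σ) = f ((p : List σ) ++ []); rw [List.append_nil]
  | a :: t, p => by
    show (∑ u : {w // w ∈ W}, (treeAut f W hnil E).trans a p u *
        (treeAut f W hnil E).run t u) = f ((p : List σ) ++ a :: t)
    have hIH : ∀ u : {w // w ∈ W}, (treeAut f W hnil E).run t u = f ((u : List σ) ++ t) :=
      fun u => treeAut_run hE t u
    by_cases hpa : (p : List σ) ++ [a] ∈ W
    · have : (∑ u : {w // w ∈ W}, (treeAut f W hnil E).trans a p u *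
          (treeAut f W hnil E).run t u) = f (((p : List σ) ++ [a]) ++ t) := by
        rw [Finset.sum_eq_single (⟨(p : List σ) ++ [a], hpa⟩ : {w // w ∈ W})]
        · rw [hIH]
          show (if _ ∈ W then (if ((p : List σ) ++ [a] : List σ) = (p : List σ) ++ [a]
              then (1:S) else 0) else _) * _ = _
          rw [if_pos hpa, if_pos rfl, one_mul]
        · intro u _ hu
          show (if _ ∈ W then (if (u : List σ) = (p : List σ) ++ [a] then (1:S) else 0)
              else _) * _ = 0
          rw [if_pos hpa, if_neg (fun h => hu (Subtype.ext h)), zero_mul]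
        · intro h; exact absurd (Finset.mem_univ _) h
      rw [this, List.append_assoc]
      rfl
    · have : ∀ u : {w // w ∈ W}, (treeAut f W hnil E).trans a p u = E (p : List σ) a u :=
        fun u => if_neg hpa
      calc (∑ u : {w // w ∈ W}, (treeAut f W hnil E).trans a p u *
              (treeAut f W hnil E).run t u)
          = ∑ u : {w // w ∈ W}, E (p : List σ) a u * f ((u : List σ) ++ t) := by
            refine Finset.sum_congr rfl fun u _ => ?_
            rw [this, hIH]
        _ = f ((p : List σ) ++ a :: t) := hE _ a t

lemma treeAut_run_exists (h1 : (1 : S) ≠ 0)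
    (hpc : ∀ w ∈ W, ∀ u, u <+: w → u ∈ W) :
    ∀ (w u : List σ) (hu : u ∈ W) (hw : u ++ w ∈ W),
      ∃ l, (treeAut f W hnil E).IsRun ⟨u, hu⟩ w l ∧
        (treeAut f W hnil E).RunWeightsOne ⟨u, hu⟩ w l ∧
        ((⟨u, hu⟩ :: l).getLast (List.cons_ne_nil _ _) : {w // w ∈ W}) = ⟨u ++ w, hw⟩
  | [], u, hu, hw => by
    refine ⟨[], rfl, trivial, ?_⟩
    exact Subtype.ext (List.append_nil u).symm
  | a :: w, u, hu, hw => by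
    have ha : u ++ [a] ∈ W := hpc _ hw (u ++ [a]) ⟨w, by simp⟩
    have hw' : (u ++ [a]) ++ w ∈ W := by rw [List.append_assoc]; exact hw
    obtain ⟨l, hr, hrwo, hlast⟩ := treeAut_run_exists h1 hpc w (u ++ [a]) ha hw'
    have htrans : (treeAut f W hnil E).trans a ⟨u, hu⟩ ⟨u ++ [a], ha⟩ = 1 := by
      show (if _ ∈ W then (if (u ++ [a] : List σ) = u ++ [a] then (1:S) else 0) else _) = 1
      rw [if_pos ha, if_pos rfl]
    refine ⟨⟨u ++ [a], ha⟩ :: l, ⟨⟨u ++ [a], ha⟩, l, rfl, by rw [htrans]; exact h1, hr⟩,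
      ⟨⟨u ++ [a], ha⟩, l, rfl, htrans, hrwo⟩, ?_⟩
    exact (List.getLast_cons (List.cons_ne_nil _ _)).trans (hlast.trans (Subtype.ext (by simp)))

lemma treeAut_run_unique (hpc : ∀ w ∈ W, ∀ u, u <+: w → u ∈ W) :
    ∀ (w u : List σ) (hu : u ∈ W) (hw : u ++ w ∈ W) (l : List {w // w ∈ W}),
      (treeAut f W hnil E).IsRun ⟨u, hu⟩ w l →
      (treeAut f W hnil E).RunWeightsOne ⟨u, hu⟩ w l ∧
      ((⟨u, hu⟩ :: l).getLast (List.cons_ne_nil _ _) : {w // w ∈ W}) = ⟨u ++ w, hw⟩ ∧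
      ∀ l', (treeAut f W hnil E).IsRun ⟨u, hu⟩ w l' → l' = l
  | [], u, hu, hw, l, hl => by
    have : l = [] := hl
    subst this
    exact ⟨trivial, Subtype.ext (List.append_nil u).symm, fun l' hl' => hl'⟩
  | a :: w, u, hu, hw, l, hl => by
    have ha : u ++ [a] ∈ W := hpc _ hw (u ++ [a]) ⟨w, by simp⟩
    have hw' : (u ++ [a]) ++ w ∈ W := by rw [List.append_assoc]; exact hw
    have hforce : ∀ q : {w // w ∈ W}, (treeAut f W hnil E).trans a ⟨u, hu⟩ q ≠ 0 →
        q = ⟨u ++ [a], ha⟩ := by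
      intro q hq
      by_contra hcon
      refine hq ?_
      show (if _ ∈ W then (if (q : List σ) = u ++ [a] then (1:S) else 0) else _) = 0
      rw [if_pos ha, if_neg (fun h => hcon (Subtype.ext h))]
    have htrans : (treeAut f W hnil E).trans a ⟨u, hu⟩ ⟨u ++ [a], ha⟩ = 1 := by
      show (if _ ∈ W then (if (u ++ [a] : List σ) = u ++ [a] then (1:S) else 0) else _) = 1
      rw [if_pos ha, if_pos rfl]
    obtain ⟨q, l₁, rfl, hne, hr⟩ := hl
    obtain rfl : q = ⟨u ++ [a], ha⟩ := hforce q hne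
    obtain ⟨hrwo, hlast, huniq⟩ := treeAut_run_unique hpc w (u ++ [a]) ha hw' l₁ hr
    refine ⟨⟨_, l₁, rfl, htrans, hrwo⟩, ?_, ?_⟩
    · exact (List.getLast_cons (List.cons_ne_nil _ _)).trans (hlast.trans (Subtype.ext (by simp)))
    · rintro l' ⟨q', l₁', rfl, hne', hr'⟩
      obtain rfl : q' = ⟨u ++ [a], ha⟩ := hforce q' hne'
      rw [huniq l₁' hr']

end LearnWAProof

open LearnWA LearnWAProof

theorem statement7 {σ S : Type} [Fintype σ] [Semiring S] (f : List σ → S) :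
    WeaklyGuessable f ↔ ∃ A : WAuto σ S, A.Literal ∧ A.Computes f := by
  classical
  by_cases htriv : (1 : S) = 0
  · -- trivial semiring: everything is 0
    have hsub : ∀ x y : S, x = y := by
      intro x y
      have hx : x = 0 := by rw [← mul_one x, htriv, mul_zero]
      have hy : y = 0 := by rw [← mul_one y, htriv, mul_zero]
      rw [hx, hy]
    constructor
    · intro _
      refine ⟨@WAuto.mk σ S PUnit inferInstance (fun _ => 1) (fun _ _ _ => 0)
          (fun _ => 0), ?_, fun w => hsub _ _⟩
      refine ⟨PUnit.unit, rfl, fun q hq => absurd rfl hq, {[]}, fun _ => [], ?_, ?_, ?_, ?_⟩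
      · intro w hw u hu
        rw [Set.mem_singleton_iff] at hw
        subst hw
        rw [List.prefix_nil.mp hu]
        exact Set.mem_singleton _
      · intro a b _
        exact Subsingleton.elim a b
      · exact Set.range_const
      · intro q
        refine ⟨⟨[], rfl, fun y hy => hy⟩, fun l hl => ?_⟩
        have : l = [] := hl
        subst this
        exact ⟨trivial, rfl⟩
    · intro _
      refine ⟨{f}, ⟨f, Finset.mem_singleton_self f⟩, ?_, ⟨(fun _ => 0, fun _ _ _ => 0), ?_, ?_⟩⟩
      · intro q hq
        rw [Finset.mem_singleton] at hq
        exact ⟨[], hq⟩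
      · intro t _
        exact hsub _ _
      · intro q a t _
        exact hsub _ _
  · have h1 : (1 : S) ≠ 0 := htriv
    constructor
    · -- weakly guessable → literal automaton
      rintro ⟨Q, hQne, hrows, ⟨ι, μ⟩, hι, hμ⟩
      have hι' : ∀ t, f t = ∑ q : Q, ι q * (q : List σ → S) t := fun t => hι t trivial
      have hμ' : ∀ (q : Q) (a : σ) (t : List σ),
          (q : List σ → S) (a :: t) = ∑ p : Q, μ q a p * (p : List σ → S) t :=
        fun q a t => hμ q a t trivial
      choose v hv using fun q : {x // x ∈ Q} => hrows q.1 q.2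
      set W : Finset (List σ) := Finset.univ.biUnion
        (fun q : {x // x ∈ Q} => (v q).inits.toFinset) with hW
      have hWmem : ∀ w, w ∈ W ↔ ∃ q : {x // x ∈ Q}, w <+: v q := by
        intro w
        simp [hW, List.mem_inits]
      have hpc : ∀ w ∈ W, ∀ u, u <+: w → u ∈ W := by
        intro w hw u hu
        obtain ⟨q, hq⟩ := (hWmem w).mp hw
        exact (hWmem u).mpr ⟨q, hu.trans hq⟩
      have hWv : ∀ q : {x // x ∈ Q}, v q ∈ W :=
        fun q => (hWmem _).mpr ⟨q, List.prefix_refl _⟩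
      have hnil : [] ∈ W := by
        obtain ⟨q, hq⟩ := hQne
        exact (hWmem _).mpr ⟨⟨q, hq⟩, List.nil_prefix⟩
      set c : List σ → {x // x ∈ Q} → S :=
        fun w => w.foldl (fun d a q => ∑ p : Q, d p * μ p a q) ι with hc
      have hrow : ∀ (w t : List σ), f (w ++ t) = ∑ q : Q, c w q * (q : List σ → S) t :=
        fun w t => coeff_prop μ hμ' w ι f hι' t
      set E : List σ → σ → {w // w ∈ W} → S := fun w a u =>
        ∑ q ∈ Finset.univ.filter
          (fun q : {x // x ∈ Q} => (⟨v q, hWv q⟩ : {w // w ∈ W}) = u), c (w ++ [a]) q with hE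
      have hEkey : ∀ (w : List σ) (a : σ) (t : List σ),
          (∑ u : {w // w ∈ W}, E w a u * f ((u : List σ) ++ t)) = f (w ++ a :: t) := by
        intro w a t
        have step1 : (∑ u : {w // w ∈ W}, E w a u * f ((u : List σ) ++ t))
            = ∑ u : {w // w ∈ W}, ∑ q ∈ Finset.univ.filter
                (fun q : {x // x ∈ Q} => (⟨v q, hWv q⟩ : {w // w ∈ W}) = u),
                c (w ++ [a]) q * f ((v q) ++ t) := by
          refine Finset.sum_congr rfl fun u _ => ?_
          rw [hE, Finset.sum_mul]
          refine Finset.sum_congr rfl fun q hq => ?_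
          rw [Finset.mem_filter] at hq
          rw [← hq.2]
        rw [step1, Finset.sum_fiberwise_of_maps_to (fun q _ => Finset.mem_univ _)]
        have step2 : ∀ q : {x // x ∈ Q}, f (v q ++ t) = (q : List σ → S) t := by
          intro q
          rw [hv q]
          rfl
        calc (∑ q : Q, c (w ++ [a]) q * f (v q ++ t))
            = ∑ q : Q, c (w ++ [a]) q * (q : List σ → S) t :=
              Finset.sum_congr rfl fun q _ => by rw [step2]
          _ = f ((w ++ [a]) ++ t) := (hrow _ _).symm
          _ = f (w ++ a :: t) := by rw [List.append_assoc]; rfl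
      refine ⟨treeAut f W hnil E, ?_, ?_⟩
      · refine ⟨⟨[], hnil⟩, ?_, ?_, ↑W, fun q => q.1,
          ?_, fun a b h => Subtype.ext h, ?_, ?_⟩
        · show (if (⟨[], hnil⟩ : {w // w ∈ W}) = ⟨[], hnil⟩ then (1:S) else 0) = 1
          rw [if_pos rfl]
        · intro q hq
          exact if_neg hq
        · intro w hw u hu
          exact Finset.mem_coe.mpr (hpc w (Finset.mem_coe.mp hw) u hu)
        · ext x
          constructor
          · rintro ⟨q, rfl⟩
            exact Finset.mem_coe.mpr q.2
          · intro hx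
            exact ⟨⟨x, Finset.mem_coe.mp hx⟩, rfl⟩
        · intro q
          have hq2 : ([] : List σ) ++ q.1 ∈ W := q.2
          obtain ⟨l, hr, hrwo, hlast⟩ := treeAut_run_exists h1 hpc q.1 [] hnil hq2
          obtain ⟨_, _, huniq⟩ := treeAut_run_unique hpc q.1 [] hnil hq2 l hr
          refine ⟨⟨l, hr, fun l' hl' => huniq l' hl'⟩, ?_⟩
          intro l' hl'
          obtain ⟨hrwo', hlast', _⟩ := treeAut_run_unique hpc q.1 [] hnil hq2 l' hl'
          refine ⟨hrwo', ?_⟩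
          exact hlast'.trans (Subtype.ext rfl)
      · intro t
        show f t = ∑ q : {w // w ∈ W}, (if q = ⟨[], hnil⟩ then (1:S) else 0) *
          (treeAut f W hnil E).run t q
        rw [Finset.sum_eq_single (⟨[], hnil⟩ : {w // w ∈ W})]
        · rw [if_pos rfl, one_mul, treeAut_run hEkey]
          rfl
        · intro u _ hu
          rw [if_neg hu, zero_mul]
        · intro h
          exact absurd (Finset.mem_univ _) h
    · -- literal automaton → weakly guessable
      rintro ⟨A, ⟨q0, hq01, hq00, W', b, hpcA, hbinj, hbrange, hruns⟩, hcomp⟩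
      have hfrun : ∀ t, f t = A.run t q0 := by
        intro t
        rw [hcomp t, Finset.sum_eq_single q0]
        · rw [hq01, one_mul]
        · intro r _ hr
          rw [hq00 r hr, zero_mul]
        · intro h
          exact absurd (Finset.mem_univ _) h
      have hnilW : [] ∈ W' := by
        have hb : b q0 ∈ W' := hbrange ▸ Set.mem_range_self q0
        exact hpcA _ hb [] (List.nil_prefix)
      obtain ⟨q1, hq1⟩ : ∃ q1, b q1 = [] := by
        rw [← hbrange] at hnilW
        exact hnilW
      have hbq0 : b q0 = [] := by
        have h2 := (hruns q1).2
        rw [hq1] at h2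
        have h3 := (h2 [] rfl).2
        have : q0 = q1 := by simpa using h3
        rw [← this] at hq1
        exact hq1
      have hrowrun : ∀ (q : A.State) (w : List σ), row f (b q) w = A.run w q := by
        intro q w
        obtain ⟨⟨l, hl, hluniq⟩, hprops⟩ := hruns q
        obtain ⟨hrwo, hlast⟩ := hprops l hl
        show f (b q ++ w) = A.run w q
        rw [hfrun, run_shift A h1 (b q) q0 l (fun l' hl' => hluniq l' hl') hl hrwo w, hlast]
      set QF : Finset (List σ → S) := Finset.image (fun q => row f (b q)) Finset.univ with hQF
      have hmem : ∀ q : A.State, row f (b q) ∈ QF :=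
        fun q => Finset.mem_image_of_mem _ (Finset.mem_univ q)
      have hrep : ∀ x : {g // g ∈ QF}, ∃ q : A.State, row f (b q) = (x : List σ → S) := by
        intro x
        obtain ⟨q, _, hq⟩ := Finset.mem_image.mp x.2
        exact ⟨q, hq⟩
      choose rep hrepeq using hrep
      refine ⟨QF, ⟨row f (b q0), hmem q0⟩, ?_,
        ⟨(fun x => if (x : List σ → S) = row f (b q0) then 1 else 0,
          fun x a y => ∑ r ∈ Finset.univ.filter
            (fun r : A.State => (⟨row f (b r), hmem r⟩ : {g // g ∈ QF}) = y),
            A.trans a (rep x) r), ?_, ?_⟩⟩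
      · intro x hx
        obtain ⟨q, _, rfl⟩ := Finset.mem_image.mp hx
        exact ⟨b q, rfl⟩
      · intro t _
        rw [Finset.sum_eq_single (⟨row f (b q0), hmem q0⟩ : {g // g ∈ QF})]
        · show f t = (if (row f (b q0) : List σ → S) = row f (b q0) then (1:S) else 0)
            * row f (b q0) t
          rw [if_pos rfl, one_mul, hbq0]
          rfl
        · intro y _ hy
          show (if (y : List σ → S) = row f (b q0) then (1:S) else 0) * (y : List σ → S) t = 0
          rw [if_neg (fun h => hy (Subtype.ext h)), zero_mul]
        · intro h
          exact absurd (Finset.mem_univ _) h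
      · intro x a t _
        have lhs1 : (x : List σ → S) (a :: t) = A.run (a :: t) (rep x) := by
          rw [← hrepeq x, hrowrun]
        have lhs2 : A.run (a :: t) (rep x) = ∑ r : A.State, A.trans a (rep x) r * A.run t r :=
          rfl
        rw [lhs1, lhs2,
          ← Finset.sum_fiberwise_of_maps_to
            (g := fun r : A.State => (⟨row f (b r), hmem r⟩ : {g // g ∈ QF}))
            (fun r _ => Finset.mem_univ _) (fun r => A.trans a (rep x) r * A.run t r)]
        refine Finset.sum_congr rfl fun y _ => ?_
        show (∑ r ∈ Finset.univ.filter
            (fun r : A.State => (⟨row f (b r), hmem r⟩ : {g // g ∈ QF}) = y),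
            A.trans a (rep x) r * A.run t r)
          = (∑ r ∈ Finset.univ.filter
            (fun r : A.State => (⟨row f (b r), hmem r⟩ : {g // g ∈ QF}) = y),
            A.trans a (rep x) r) * (y : List σ → S) t
        rw [Finset.sum_mul]
        refine Finset.sum_congr rfl fun r hr => ?_
        rw [Finset.mem_filter] at hr
        rw [← hr.2]
        congr 1
        exact (hrowrun r t).symm
end

section
/- A function f : Σ* → S is weakly guessable if and only if f satisfies the weak ascending chain condition. -/
open scoped Classical

open LearnWA

theorem statement8 {σ S : Type} [Fintype σ] [Semiring S] (f : List σ → S) :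
    WeaklyGuessable f ↔ WeakACC f := by
  constructor
  · rintro ⟨Q, hQne, hQrows, lam, hlam⟩
    obtain ⟨hlam1, hlam2⟩ := hlam
    intro X hmonostep hspan hcover
    have hmono : ∀ i j, i ≤ j → X i ≤ X j := fun i j h =>
      monotone_nat_of_le_succ hmonostep h
    -- span of Q is closed under one-letter right shifts
    have hclosed1 : ∀ x ∈ Submodule.span S (Q : Set (List σ → S)), ∀ a : σ,
        shiftR x [a] ∈ Submodule.span S (Q : Set (List σ → S)) := by
      intro x hx a
      induction hx using Submodule.span_induction with
      | mem q hq =>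
          have hq' : shiftR q [a] = ∑ p : Q, lam.2 ⟨q, hq⟩ a p • (p : List σ → S) := by
            funext t
            have h := hlam2 ⟨q, hq⟩ a t (Set.mem_univ t)
            simpa [shiftR, Finset.sum_apply, smul_eq_mul] using h
          rw [hq']
          exact Submodule.sum_mem _ fun p _ =>
            Submodule.smul_mem _ _ (Submodule.subset_span p.2)
      | zero =>
          have : shiftR (0 : List σ → S) [a] = 0 := rfl
          rw [this]; exact Submodule.zero_mem _
      | add y z hy hz ihy ihz =>
          have : shiftR (y + z) [a] = shiftR y [a] + shiftR z [a] := rfl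
          rw [this]; exact Submodule.add_mem _ ihy ihz
      | smul c y hy ih =>
          have : shiftR (c • y) [a] = c • shiftR y [a] := rfl
          rw [this]; exact Submodule.smul_mem _ _ ih
    -- hence closed under arbitrary right shifts
    have hshift : ∀ v : List σ, ∀ x ∈ Submodule.span S (Q : Set (List σ → S)),
        shiftR x v ∈ Submodule.span S (Q : Set (List σ → S)) := by
      intro v
      induction v with
      | nil => intro x hx; exact hx
      | cons a v ih =>
          intro x hx
          exact ih _ (hclosed1 x hx a)
    -- the empty row is in the span
    have hf0 : row f [] ∈ Submodule.span S (Q : Set (List σ → S)) := by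
      have h : row f [] = ∑ q : Q, lam.1 q • (q : List σ → S) := by
        funext t
        simpa [row, Finset.sum_apply, smul_eq_mul] using hlam1 t (Set.mem_univ t)
      rw [h]
      exact Submodule.sum_mem _ fun p _ =>
        Submodule.smul_mem _ _ (Submodule.subset_span p.2)
    -- hence every row is
    have hrow : ∀ v : List σ, row f v ∈ Submodule.span S (Q : Set (List σ → S)) :=
      fun v => hshift v _ hf0
    -- find an index containing all of Q
    have hex : ∀ q ∈ Q, ∃ i, q ∈ X i := by
      intro q hq
      obtain ⟨w, rfl⟩ := hQrows q hq
      exact hcover w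
    choose ix hix using hex
    refine ⟨Q.attach.sup (fun q => ix q.1 q.2), fun m hm => ?_⟩
    set n := Q.attach.sup (fun q => ix q.1 q.2) with hn
    have hQin : ∀ q ∈ Q, q ∈ X n := fun q hq =>
      hmono _ _ (Finset.le_sup (f := fun q => ix q.1 q.2) (Finset.mem_attach _ ⟨q, hq⟩))
        (hix q hq)
    have hspanle : Submodule.span S (Q : Set (List σ → S)) ≤ X n :=
      Submodule.span_le.2 (fun q hq => hQin q hq)
    refine le_antisymm ?_ (hmono n m hm)
    obtain ⟨R, hR⟩ := hspan m
    rw [hR]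
    apply Submodule.span_le.2
    intro x hx
    simp only [Finset.coe_image, Set.mem_image, Finset.mem_coe] at hx
    obtain ⟨v, _, rfl⟩ := hx
    exact hspanle (hrow v)
  · intro hacc
    obtain ⟨e, he⟩ := exists_surjective_nat (List σ)
    set X : ℕ → Submodule S (List σ → S) :=
      fun i => Submodule.span S ↑((((Finset.range (i+1)).image e)).image (row f)) with hX
    have hXmono : ∀ i, X i ≤ X (i+1) := by
      intro i
      apply Submodule.span_mono
      apply Finset.coe_subset.2
      apply Finset.image_subset_image
      apply Finset.image_subset_image
      exact Finset.range_subset_range.2 (by omega)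
    have hXform : ∀ i, ∃ R : Finset (List σ),
        X i = Submodule.span S (↑(R.image (row f)) : Set (List σ → S)) :=
      fun i => ⟨(Finset.range (i+1)).image e, rfl⟩
    have hXcover : ∀ v : List σ, ∃ i, row f v ∈ X i := by
      intro v
      obtain ⟨k, rfl⟩ := he v
      refine ⟨k, Submodule.subset_span ?_⟩
      simp only [Finset.coe_image, Set.mem_image, Finset.mem_coe, Finset.mem_image,
        Finset.mem_range]
      exact ⟨e k, ⟨k, by omega, rfl⟩, rfl⟩
    have hXmono' : ∀ i j, i ≤ j → X i ≤ X j := fun i j h =>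
      monotone_nat_of_le_succ hXmono h
    obtain ⟨n, hn⟩ := hacc X hXmono hXform hXcover
    set Q : Finset (List σ → S) := ((Finset.range (n+1)).image e).image (row f) with hQ
    have hQX : X n = Submodule.span S (Q : Set (List σ → S)) := rfl
    have hrowmem : ∀ v : List σ, row f v ∈ Submodule.span S (Q : Set (List σ → S)) := by
      intro v
      obtain ⟨k, hk⟩ := hXcover v
      have h1 : row f v ∈ X (max k n) := hXmono' k _ (le_max_left _ _) hk
      have h2 : X (max k n) = X n := hn _ (le_max_right _ _)
      rw [← hQX, ← h2]
      exact h1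
    have hmem1 := hrowmem []
    rw [Submodule.mem_span_finset] at hmem1
    obtain ⟨c1, -, hc1⟩ := hmem1
    have h2 : ∀ (q : ↥Q) (a : σ), ∃ c : (List σ → S) → S,
        ∑ p ∈ Q, c p • p = shiftR (q : List σ → S) [a] := by
      intro q a
      refine (fun h => ⟨_, (Submodule.mem_span_finset.1 h).choose_spec.2⟩) ?_
      obtain ⟨w, hw⟩ : ∃ w, (q : List σ → S) = row f w := by
        obtain ⟨v, _, h⟩ := Finset.mem_image.1 (show (q : List σ → S) ∈
          Finset.image (row f) (Finset.image e (Finset.range (n+1))) from q.2)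
        exact ⟨v, h.symm⟩
      have heq : shiftR (q : List σ → S) [a] = row f (w ++ [a]) := by
        funext t
        simp [hw, shiftR, row, List.append_assoc]
      rw [heq]
      exact hrowmem _
    choose c2 hc2 using h2
    have hQne : Q.Nonempty := by
      refine Finset.Nonempty.image (Finset.Nonempty.image ⟨0, ?_⟩ e) (row f)
      simp
    refine ⟨Q, hQne, ?_, ⟨(fun q => c1 q, fun q a p => c2 q a p), ?_, ?_⟩⟩
    · intro q hq
      rw [hQ, Finset.mem_image] at hq
      obtain ⟨v, _, h⟩ := hq
      exact ⟨v, h.symm⟩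
    · intro t _
      have h := congrFun hc1 t
      simp only [Finset.sum_apply, Pi.smul_apply, smul_eq_mul] at h
      rw [Finset.sum_coe_sort Q (fun y => c1 y * y t)]
      exact h.symm
    · intro q a t _
      have h := congrFun (hc2 q a) t
      simp only [Finset.sum_apply, Pi.smul_apply, smul_eq_mul] at h
      rw [Finset.sum_coe_sort Q (fun y => c2 q a y * y t)]
      exact h.symm
end

section
/- A function f : Σ* → S is guessable if and only if f is row-bound. -/
open scoped Classical

open LearnWA

namespace LearnWA

variable {σ S : Type} [Semiring S]

theorem Lambda_antitone (f : List σ → S) (Q : Finset (List σ → S))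
    {T₁ T₂ : Set (List σ)} (h : T₁ ⊆ T₂) : Lambda f Q T₂ ⊆ Lambda f Q T₁ := by
  rintro lam ⟨h1, h2⟩
  exact ⟨fun t ht => h1 t (h ht), fun q a t ht => h2 q a t (h ht)⟩

theorem LambdaW_antitone (f : List σ → S) (Q : Finset (List σ))
    {T₁ T₂ : Set (List σ)} (h : T₁ ⊆ T₂) : LambdaW f Q T₂ ⊆ LambdaW f Q T₁ :=
  Lambda_antitone f _ h

end LearnWA

theorem statement9 {σ S : Type} [Fintype σ] [Semiring S] (f : List σ → S) :
    Guessable f ↔ RowBound f := by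
  constructor
  · rintro ⟨Q, T, hQ, hT, hEq, hNe⟩
    refine ⟨Q, hQ, hNe, ?_⟩
    rintro Ts ⟨hmono, htot, hstr⟩
    have hmono' : Monotone Ts := monotone_nat_of_le_succ hmono
    -- find i with ↑T ⊆ Ts i
    have hfin : ∃ i, (↑T : Set (List σ)) ⊆ Ts i := by
      have : ∀ t ∈ T, ∃ i, t ∈ Ts i := fun t _ => htot t
      choose g hg using this
      classical
      obtain ⟨t0, ht0⟩ := hT
      refine ⟨T.sup (fun t => if h : t ∈ T then g t h else 0), ?_⟩
      intro t ht'
      have ht : t ∈ T := ht'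
      exact hmono' (by
        have : g t ht ≤ T.sup (fun t => if h : t ∈ T then g t h else 0) := by
          have := Finset.le_sup (f := fun t => if h : t ∈ T then g t h else 0) ht
          simpa only [dif_pos ht] using this
        exact this) (hg t ht)
    obtain ⟨i, hi⟩ := hfin
    have h1 : LambdaW f Q (Ts i) ⊆ LambdaW f Q (↑T : Set (List σ)) :=
      LambdaW_antitone f Q hi
    have h2 : LambdaW f Q Set.univ ⊆ LambdaW f Q (Ts (i + 1)) :=
      LambdaW_antitone f Q (Set.subset_univ _)
    rw [hEq] at h1
    exact (hstr i).2 (h1.trans h2)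
  · rintro ⟨Q, hQ, hNe, hnochain⟩
    classical
    obtain ⟨e, he⟩ := exists_surjective_nat (List σ)
    set U : ℕ → Finset (List σ) := fun n => (Finset.range (n + 1)).image e with hU
    have hUmono : ∀ {m n : ℕ}, m ≤ n → U m ⊆ U n := by
      intro m n hmn
      exact Finset.image_subset_image (Finset.range_subset_range.mpr (by omega))
    have hUmem : ∀ w : List σ, ∃ k, w ∈ U k := by
      intro w
      obtain ⟨k, hk⟩ := he w
      exact ⟨k, Finset.mem_image.mpr ⟨k, Finset.mem_range.mpr (by omega), hk⟩⟩
    by_cases hstab : ∃ n, ∀ m ≥ n, LambdaW f Q (↑(U m)) = LambdaW f Q (↑(U n))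
    · obtain ⟨n, hn⟩ := hstab
      refine ⟨Q, U n, hQ, ⟨e 0, Finset.mem_image.mpr ⟨0, by simp, rfl⟩⟩, ?_, hNe⟩
      apply Set.Subset.antisymm
      · intro lam hlam
        constructor
        · intro t _
          obtain ⟨k, hk⟩ := hUmem t
          have hmem : lam ∈ LambdaW f Q (↑(U (max n k))) := by
            rw [hn (max n k) (le_max_left _ _)]; exact hlam
          exact hmem.1 t (hUmono (le_max_right n k) hk)
        · intro q a t _
          obtain ⟨k, hk⟩ := hUmem t
          have hmem : lam ∈ LambdaW f Q (↑(U (max n k))) := by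
            rw [hn (max n k) (le_max_left _ _)]; exact hlam
          exact hmem.2 q a t (hUmono (le_max_right n k) hk)
      · exact LambdaW_antitone f Q (Set.subset_univ _)
    · push_neg at hstab
      have hstep : ∀ n, ∃ m, n < m ∧ LambdaW f Q (↑(U m)) ≠ LambdaW f Q (↑(U n)) := by
        intro n
        obtain ⟨m, hm, hne⟩ := hstab n
        refine ⟨m, lt_of_le_of_ne hm ?_, hne⟩
        rintro rfl; exact hne rfl
      let seq : ℕ → ℕ := fun i => Nat.rec 0 (fun _ prev => Classical.choose (hstep prev)) i
      have hseq_succ : ∀ i, seq i < seq (i + 1) ∧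
          LambdaW f Q (↑(U (seq (i + 1)))) ≠ LambdaW f Q (↑(U (seq i))) := by
        intro i
        exact Classical.choose_spec (hstep (seq i))
      have hseq_ge : ∀ i, i ≤ seq i := by
        intro i
        induction i with
        | zero => exact Nat.zero_le _
        | succ k ih => exact Nat.lt_of_le_of_lt ih (hseq_succ k).1
      refine (hnochain (fun i => ↑(U (seq i))) ⟨?_, ?_, ?_⟩).elim
      · intro i
        exact_mod_cast hUmono (le_of_lt (hseq_succ i).1)
      · intro w
        obtain ⟨k, hk⟩ := hUmem w
        exact ⟨k, by exact_mod_cast hUmono (hseq_ge k) hk⟩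
      · intro i
        exact lt_of_le_of_ne
          (LambdaW_antitone f Q (by exact_mod_cast hUmono (le_of_lt (hseq_succ i).1)))
          (hseq_succ i).2
end

section
/- A function f : Σ* → S is strongly guessable if and only if f is strongly row-bound and weakly guessable. -/
open scoped Classical

open LearnWA


section MyAux

variable {σ S : Type} [Semiring S]

lemma lambdaW_antitone (f : List σ → S) (Q : Finset (List σ)) {T T' : Set (List σ)}
    (h : T ⊆ T') : LambdaW f Q T' ⊆ LambdaW f Q T := by
  intro lam hl
  exact ⟨fun t ht => hl.1 t (h ht), fun q a t ht => hl.2 q a t (h ht)⟩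

lemma exists_bad_word (f : List σ → S) (Q : Finset (List σ))
    {lam} (h : lam ∉ LambdaW f Q Set.univ) :
    ∃ t : List σ, ∀ T : Set (List σ), t ∈ T → lam ∉ LambdaW f Q T := by
  by_contra hc
  push_neg at hc
  apply h
  constructor
  · intro t _
    obtain ⟨T, hT, hm⟩ := hc t
    exact hm.1 t hT
  · intro q a t _
    obtain ⟨T, hT, hm⟩ := hc t
    exact hm.2 q a t hT

lemma key_lemma [Fintype σ] (f : List σ → S) (hrb : StronglyRowBound f) :
    ∀ Q : Finset (List σ), Q.Nonempty →
      ∃ T : Finset (List σ), T.Nonempty ∧ LambdaW f Q ↑T = LambdaW f Q Set.univ := by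
  intro Q hQ
  by_contra hc
  push_neg at hc
  obtain ⟨e, he⟩ := exists_surjective_nat (List σ)
  have step : ∀ T : Finset (List σ), ∃ t, T.Nonempty →
      LambdaW f Q ↑(insert t T) ⊂ LambdaW f Q ↑T := by
    intro T
    by_cases hT : T.Nonempty
    · have hne := hc T hT
      have hsub : LambdaW f Q Set.univ ⊆ LambdaW f Q ↑T :=
        lambdaW_antitone f Q (Set.subset_univ _)
      obtain ⟨lam, hlT, hlU⟩ := Set.exists_of_ssubset (hsub.ssubset_of_ne (Ne.symm hne))
      obtain ⟨t, ht⟩ := exists_bad_word f Q hlU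
      refine ⟨t, fun _ => ?_⟩
      have hsub2 : LambdaW f Q ↑(insert t T) ⊆ LambdaW f Q ↑T :=
        lambdaW_antitone f Q (Finset.coe_subset.2 (Finset.subset_insert _ _))
      exact (Set.ssubset_iff_of_subset hsub2).2
        ⟨lam, hlT, ht _ (Finset.mem_coe.2 (Finset.mem_insert_self t T))⟩
    · exact ⟨e 0, fun h => absurd h hT⟩
  choose g hg using step
  obtain ⟨Tn, hTn0, hTnS⟩ : ∃ Tn : ℕ → Finset (List σ), Tn 0 = {e 0} ∧
      ∀ i, Tn (i + 1) = insert (e (i + 1)) (insert (g (Tn i)) (Tn i)) :=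
    ⟨fun n => Nat.rec {e 0} (fun i Ti => insert (e (i + 1)) (insert (g Ti) Ti)) n,
      rfl, fun i => rfl⟩
  have hTne : ∀ n, (Tn n).Nonempty := by
    intro n
    cases n with
    | zero => rw [hTn0]; exact Finset.singleton_nonempty _
    | succ i => rw [hTnS i]; exact Finset.insert_nonempty _ _
  have hmono : ∀ i, Tn i ⊆ Tn (i + 1) := by
    intro i
    rw [hTnS i]
    exact Finset.Subset.trans (Finset.subset_insert _ _) (Finset.subset_insert _ _)
  have hcov : ∀ n, e n ∈ Tn n := by
    intro n
    cases n with
    | zero => rw [hTn0]; exact Finset.mem_singleton_self _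
    | succ i => rw [hTnS i]; exact Finset.mem_insert_self _ _
  have hstrict : ∀ i, LambdaW f Q ↑(Tn (i + 1)) ⊂ LambdaW f Q ↑(Tn i) := by
    intro i
    have h1 := hg (Tn i) (hTne i)
    have h2 : LambdaW f Q ↑(Tn (i + 1)) ⊆ LambdaW f Q ↑(insert (g (Tn i)) (Tn i)) := by
      rw [hTnS i]
      exact lambdaW_antitone f Q (Finset.coe_subset.2 (Finset.subset_insert _ _))
    exact lt_of_le_of_lt h2 h1
  refine hrb Q hQ (fun n => ↑(Tn n)) ⟨fun i => Finset.coe_subset.2 (hmono i), ?_, hstrict⟩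
  intro w
  obtain ⟨n, rfl⟩ := he w
  exact ⟨n, Finset.mem_coe.2 (hcov n)⟩

end MyAux

theorem statement10 {σ S : Type} [Fintype σ] [Semiring S] (f : List σ → S) :
    StronglyGuessable f ↔ (StronglyRowBound f ∧ WeaklyGuessable f) := by
  constructor
  · rintro ⟨⟨Q0, T0, hQ0, hT0, hEq0, hNe0⟩, hstr⟩
    refine ⟨?_, ?_⟩
    · intro Q hQ Tc hchain
      obtain ⟨hmono, hcover, hstrict⟩ := hchain
      obtain ⟨T1, hT1ne, hT1⟩ := hstr Q hQ
      have hm : Monotone Tc := monotone_nat_of_le_succ hmono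
      choose gidx hgidx using hcover
      have hsubTn : ↑T1 ⊆ Tc (T1.sup gidx) := by
        intro t ht
        exact hm (Finset.le_sup (Finset.mem_coe.1 ht)) (hgidx t)
      have h1 : LambdaW f Q (Tc (T1.sup gidx)) ⊆ LambdaW f Q ↑T1 :=
        lambdaW_antitone f Q hsubTn
      have h2 : LambdaW f Q Set.univ ⊆ LambdaW f Q (Tc (T1.sup gidx + 1)) :=
        lambdaW_antitone f Q (Set.subset_univ _)
      rw [hT1] at h1
      exact (hstrict (T1.sup gidx)).not_subset (h1.trans h2)
    · refine ⟨Q0.image (row f), hQ0.image _, ?_, hNe0⟩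
      intro q hq
      obtain ⟨w, -, rfl⟩ := Finset.mem_image.1 hq
      exact ⟨w, rfl⟩
  · rintro ⟨hrb, Q', hQ'ne, hrows, hlam⟩
    have key := key_lemma f hrb
    have hrowsub : ∀ q : {x // x ∈ Q'}, ∃ w, (q : List σ → S) = row f w :=
      fun q => hrows q q.2
    choose wd hwd using hrowsub
    have hWne : (Q'.attach.image wd).Nonempty :=
      (Finset.attach_nonempty_iff.2 hQ'ne).image _
    have hWQ : (Q'.attach.image wd).image (row f) = Q' := by
      apply Finset.ext
      intro x
      constructor
      · intro hx
        obtain ⟨w, hw, rfl⟩ := Finset.mem_image.1 hx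
        obtain ⟨q, -, rfl⟩ := Finset.mem_image.1 hw
        rw [← hwd q]
        exact q.2
      · intro hx
        exact Finset.mem_image.2 ⟨wd ⟨x, hx⟩,
          Finset.mem_image.2 ⟨⟨x, hx⟩, Finset.mem_attach _ _, rfl⟩, (hwd ⟨x, hx⟩).symm⟩
    have hlam' : (LambdaW f (Q'.attach.image wd) Set.univ).Nonempty := by
      unfold LambdaW
      rw [hWQ]
      exact hlam
    obtain ⟨T, hTne, hTeq⟩ := key (Q'.attach.image wd) hWne
    exact ⟨⟨Q'.attach.image wd, T, hWne, hTne, hTeq, hlam'⟩, key⟩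
end

section
/- If f : Σ* → S is weakly guessable and weakly co-guessable, then f is strongly guessable and strongly co-guessable. -/
open scoped Classical

open LearnWA

namespace LearnWAProof

open LearnWA

variable {σ S : Type} [Semiring S]

lemma sum_swap₁ {α β : Type} [Fintype α] [Fintype β] (A : α → S) (B : α → β → S) (d : β → S) :
    ∑ q : α, A q * (∑ i : β, B q i * d i) = ∑ i : β, (∑ q : α, A q * B q i) * d i := by
  simp_rw [Finset.mul_sum, Finset.sum_mul, mul_assoc]
  exact Finset.sum_comm

lemma sum_swap₂ {α β : Type} [Fintype α] [Fintype β] (c : α → S) (B : α → β → S) (g : β → S) :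
    ∑ t : β, (∑ i : α, c i * B i t) * g t = ∑ i : α, c i * (∑ t : β, B i t * g t) := by
  simp_rw [Finset.sum_mul, Finset.mul_sum, mul_assoc]
  exact Finset.sum_comm

lemma colsGen (f : List σ → S) (T' : Finset (List σ → S))
    (wt : {x // x ∈ T'} → List σ) (hwt : ∀ s : {x // x ∈ T'}, (s : List σ → S) = col f (wt s))
    (gam : ({x // x ∈ T'} → S) × ({x // x ∈ T'} → σ → {x // x ∈ T'} → S))
    (hg : gam ∈ Gamma f T' Set.univ) (t : List σ) :
    ∃ d : {x // x ∈ T'} → S, ∀ u : List σ, f (u ++ t) = ∑ s, f (u ++ wt s) * d s := by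
  induction t with
  | nil =>
    refine ⟨gam.1, fun u => ?_⟩
    rw [List.append_nil, hg.1 u (Set.mem_univ u)]
    exact Finset.sum_congr rfl fun s _ => by rw [hwt s]; rfl
  | cons a t ih =>
    obtain ⟨d, hd⟩ := ih
    refine ⟨fun s' => ∑ s, gam.2 s' a s * d s, fun u => ?_⟩
    have h1 : f (u ++ a :: t) = f ((u ++ [a]) ++ t) := by simp
    rw [h1, hd (u ++ [a])]
    have h2 : ∀ s : {x // x ∈ T'},
        f ((u ++ [a]) ++ wt s) = ∑ s', f (u ++ wt s') * gam.2 s' a s := by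
      intro s
      calc f ((u ++ [a]) ++ wt s) = (col f (wt s)) (u ++ [a]) := rfl
        _ = ∑ s' : {x // x ∈ T'}, (s' : List σ → S) u * gam.2 s' a s := by
              rw [← hwt s]; exact hg.2 s a u (Set.mem_univ u)
        _ = ∑ s' : {x // x ∈ T'}, f (u ++ wt s') * gam.2 s' a s :=
              Finset.sum_congr rfl fun s' _ => by rw [hwt s']; rfl
    simp_rw [h2]
    exact sum_swap₂ _ _ _

lemma rowsGen (f : List σ → S) (Q' : Finset (List σ → S))
    (wq : {x // x ∈ Q'} → List σ) (hwq : ∀ q : {x // x ∈ Q'}, (q : List σ → S) = row f (wq q))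
    (lam : ({x // x ∈ Q'} → S) × ({x // x ∈ Q'} → σ → {x // x ∈ Q'} → S))
    (hl : lam ∈ Lambda f Q' Set.univ) (t : List σ) :
    ∃ c : {x // x ∈ Q'} → S, ∀ u : List σ, f (t ++ u) = ∑ q, c q * f (wq q ++ u) := by
  induction t using List.reverseRecOn with
  | nil =>
    refine ⟨lam.1, fun u => ?_⟩
    rw [List.nil_append, hl.1 u (Set.mem_univ u)]
    exact Finset.sum_congr rfl fun q _ => by rw [hwq q]; rfl
  | append_singleton t a ih =>
    obtain ⟨c, hc⟩ := ih
    refine ⟨fun p => ∑ q, c q * lam.2 q a p, fun u => ?_⟩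
    have h1 : f ((t ++ [a]) ++ u) = f (t ++ (a :: u)) := by simp
    rw [h1, hc (a :: u)]
    have h2 : ∀ q : {x // x ∈ Q'},
        f (wq q ++ (a :: u)) = ∑ p, lam.2 q a p * f (wq p ++ u) := by
      intro q
      calc f (wq q ++ (a :: u)) = (q : List σ → S) (a :: u) := by rw [hwq q]; rfl
        _ = ∑ p : {x // x ∈ Q'}, lam.2 q a p * (p : List σ → S) u := hl.2 q a u (Set.mem_univ u)
        _ = ∑ p, lam.2 q a p * f (wq p ++ u) :=
              Finset.sum_congr rfl fun p _ => by rw [hwq p]; rfl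
    simp_rw [h2]
    exact sum_swap₁ _ _ _

lemma lambda_restrict (f : List σ → S) {ι : Type} [Fintype ι] (vt : ι → List σ)
    (hV : ∀ t : List σ, ∃ d : ι → S, ∀ u, f (u ++ t) = ∑ i, f (u ++ vt i) * d i)
    (Q : Finset (List σ)) :
    LambdaW f Q ↑(Finset.univ.image vt) = LambdaW f Q Set.univ := by
  apply Set.Subset.antisymm
  · intro lam hlam
    simp only [LambdaW, Lambda, Set.mem_setOf_eq] at hlam ⊢
    obtain ⟨hA, hB⟩ := hlam
    have hmem : ∀ i : ι, (vt i : List σ) ∈ (↑(Finset.univ.image vt) : Set (List σ)) :=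
      fun i => Finset.mem_coe.mpr (Finset.mem_image_of_mem vt (Finset.mem_univ i))
    have hq : ∀ q : {x // x ∈ Q.image (row f)}, ∃ w, row f w = (q : List σ → S) := by
      intro q
      obtain ⟨w, -, hw⟩ := Finset.mem_image.mp q.2
      exact ⟨w, hw⟩
    choose wq hwq using hq
    have key : ∀ (q : {x // x ∈ Q.image (row f)}) (z : List σ),
        (q : List σ → S) z = f (wq q ++ z) := by
      intro q z; rw [← hwq q]; rfl
    constructor
    · intro t _
      obtain ⟨d, hd⟩ := hV t
      have hft : f t = ∑ i, f (vt i) * d i := by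
        have := hd []
        simpa using this
      have hqt : ∀ q : {x // x ∈ Q.image (row f)},
          (q : List σ → S) t = ∑ i, (q : List σ → S) (vt i) * d i := by
        intro q
        rw [key q t, hd (wq q)]
        exact Finset.sum_congr rfl fun i _ => by rw [key q (vt i)]
      calc f t = ∑ i, f (vt i) * d i := hft
        _ = ∑ i, (∑ q, lam.1 q * (q : List σ → S) (vt i)) * d i :=
              Finset.sum_congr rfl fun i _ => by rw [← hA (vt i) (hmem i)]
        _ = ∑ q, lam.1 q * (∑ i, (q : List σ → S) (vt i) * d i) := (sum_swap₁ _ _ _).symm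
        _ = ∑ q, lam.1 q * (q : List σ → S) t :=
              Finset.sum_congr rfl fun q _ => by rw [← hqt q]
    · intro q a t _
      obtain ⟨d, hd⟩ := hV t
      have hqt : ∀ p : {x // x ∈ Q.image (row f)},
          (p : List σ → S) t = ∑ i, (p : List σ → S) (vt i) * d i := by
        intro p
        rw [key p t, hd (wq p)]
        exact Finset.sum_congr rfl fun i _ => by rw [key p (vt i)]
      have hstep : (q : List σ → S) (a :: t) = ∑ i, (q : List σ → S) (a :: vt i) * d i := by
        rw [key q (a :: t)]
        have h3 : wq q ++ (a :: t) = (wq q ++ [a]) ++ t := by simp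
        rw [h3, hd (wq q ++ [a])]
        refine Finset.sum_congr rfl fun i _ => ?_
        rw [key q (a :: vt i)]
        congr 1
        simp
      calc (q : List σ → S) (a :: t) = ∑ i, (q : List σ → S) (a :: vt i) * d i := hstep
        _ = ∑ i, (∑ p, lam.2 q a p * (p : List σ → S) (vt i)) * d i :=
              Finset.sum_congr rfl fun i _ => by rw [← hB q a (vt i) (hmem i)]
        _ = ∑ p, lam.2 q a p * (∑ i, (p : List σ → S) (vt i) * d i) := (sum_swap₁ _ _ _).symm
        _ = ∑ p, lam.2 q a p * (p : List σ → S) t :=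
              Finset.sum_congr rfl fun p _ => by rw [← hqt p]
  · intro lam hlam
    simp only [LambdaW, Lambda, Set.mem_setOf_eq] at hlam ⊢
    exact ⟨fun t _ => hlam.1 t (Set.mem_univ t), fun q a t _ => hlam.2 q a t (Set.mem_univ t)⟩

lemma gamma_restrict (f : List σ → S) {ι : Type} [Fintype ι] (wq : ι → List σ)
    (hW : ∀ t : List σ, ∃ c : ι → S, ∀ u, f (t ++ u) = ∑ i, c i * f (wq i ++ u))
    (T : Finset (List σ)) :
    GammaW f T ↑(Finset.univ.image wq) = GammaW f T Set.univ := by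
  apply Set.Subset.antisymm
  · intro gam hgam
    simp only [GammaW, Gamma, Set.mem_setOf_eq] at hgam ⊢
    obtain ⟨hA, hB⟩ := hgam
    have hmem : ∀ i : ι, (wq i : List σ) ∈ (↑(Finset.univ.image wq) : Set (List σ)) :=
      fun i => Finset.mem_coe.mpr (Finset.mem_image_of_mem wq (Finset.mem_univ i))
    have ht : ∀ t : {x // x ∈ T.image (col f)}, ∃ w, col f w = (t : List σ → S) := by
      intro t
      obtain ⟨w, -, hw⟩ := Finset.mem_image.mp t.2
      exact ⟨w, hw⟩
    choose vt hvt using ht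
    have key : ∀ (t : {x // x ∈ T.image (col f)}) (z : List σ),
        (t : List σ → S) z = f (z ++ vt t) := by
      intro t z; rw [← hvt t]; rfl
    constructor
    · intro u _
      obtain ⟨c, hc⟩ := hW u
      have hfu : f u = ∑ i, c i * f (wq i) := by
        have := hc []
        simpa using this
      have htu : ∀ t : {x // x ∈ T.image (col f)},
          (t : List σ → S) u = ∑ i, c i * (t : List σ → S) (wq i) := by
        intro t
        rw [key t u, hc (vt t)]
        exact Finset.sum_congr rfl fun i _ => by rw [key t (wq i)]
      calc f u = ∑ i, c i * f (wq i) := hfu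
        _ = ∑ i, c i * (∑ t : {x // x ∈ T.image (col f)}, (t : List σ → S) (wq i) * gam.1 t) :=
              Finset.sum_congr rfl fun i _ => by rw [← hA (wq i) (hmem i)]
        _ = ∑ t : {x // x ∈ T.image (col f)}, (∑ i, c i * (t : List σ → S) (wq i)) * gam.1 t := (sum_swap₂ _ _ _).symm
        _ = ∑ t : {x // x ∈ T.image (col f)}, (t : List σ → S) u * gam.1 t :=
              Finset.sum_congr rfl fun t _ => by rw [← htu t]
    · intro t a u _
      obtain ⟨c, hc⟩ := hW u
      have htu : ∀ s : {x // x ∈ T.image (col f)},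
          (s : List σ → S) u = ∑ i, c i * (s : List σ → S) (wq i) := by
        intro s
        rw [key s u, hc (vt s)]
        exact Finset.sum_congr rfl fun i _ => by rw [key s (wq i)]
      have hstep : (t : List σ → S) (u ++ [a]) =
          ∑ i, c i * (t : List σ → S) (wq i ++ [a]) := by
        rw [key t (u ++ [a])]
        have h3 : (u ++ [a]) ++ vt t = u ++ ([a] ++ vt t) := by simp
        rw [h3, hc ([a] ++ vt t)]
        refine Finset.sum_congr rfl fun i _ => ?_
        rw [key t (wq i ++ [a])]
        congr 1
        simp
      calc (t : List σ → S) (u ++ [a]) = ∑ i, c i * (t : List σ → S) (wq i ++ [a]) := hstep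
        _ = ∑ i, c i * (∑ s : {x // x ∈ T.image (col f)}, (s : List σ → S) (wq i) * gam.2 s a t) :=
              Finset.sum_congr rfl fun i _ => by rw [← hB t a (wq i) (hmem i)]
        _ = ∑ s : {x // x ∈ T.image (col f)}, (∑ i, c i * (s : List σ → S) (wq i)) * gam.2 s a t := (sum_swap₂ _ _ _).symm
        _ = ∑ s : {x // x ∈ T.image (col f)}, (s : List σ → S) u * gam.2 s a t :=
              Finset.sum_congr rfl fun s _ => by rw [← htu s]
  · intro gam hgam
    simp only [GammaW, Gamma, Set.mem_setOf_eq] at hgam ⊢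
    exact ⟨fun u _ => hgam.1 u (Set.mem_univ u), fun t a u _ => hgam.2 t a u (Set.mem_univ u)⟩

end LearnWAProof

theorem statement11 {σ S : Type} [Fintype σ] [Semiring S] (f : List σ → S)
    (h1 : WeaklyGuessable f) (h2 : WeaklyCoGuessable f) :
    StronglyGuessable f ∧ StronglyCoGuessable f := by
  obtain ⟨Q', hQ'ne, hQ'rows, lam, hlam⟩ := h1
  obtain ⟨T', hT'ne, hT'cols, gam, hgam⟩ := h2
  choose wq hwq using fun q : {x // x ∈ Q'} => hQ'rows q q.2
  choose wt hwt using fun t : {x // x ∈ T'} => hT'cols t t.2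
  haveI hne_t : Nonempty {x // x ∈ T'} := Finset.nonempty_coe_sort.mpr hT'ne
  haveI hne_q : Nonempty {x // x ∈ Q'} := Finset.nonempty_coe_sort.mpr hQ'ne
  have hVgen := LearnWAProof.colsGen f T' wt hwt gam hgam
  have hWgen := LearnWAProof.rowsGen f Q' wq hwq lam hlam
  have hLam := LearnWAProof.lambda_restrict f wt hVgen
  have hGam := LearnWAProof.gamma_restrict f wq hWgen
  set V : Finset (List σ) := Finset.univ.image wt with hVdef
  set W : Finset (List σ) := Finset.univ.image wq with hWdef
  have hVne : V.Nonempty := Finset.image_nonempty.mpr Finset.univ_nonempty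
  have hWne : W.Nonempty := Finset.image_nonempty.mpr Finset.univ_nonempty
  have hWQ : W.image (row f) = Q' := by
    ext x
    constructor
    · intro hx
      obtain ⟨w, hw, rfl⟩ := Finset.mem_image.mp hx
      obtain ⟨q, -, rfl⟩ := Finset.mem_image.mp hw
      rw [← hwq q]; exact q.2
    · intro hx
      refine Finset.mem_image.mpr ⟨wq ⟨x, hx⟩, ?_, (hwq ⟨x, hx⟩).symm⟩
      exact Finset.mem_image_of_mem wq (Finset.mem_univ _)
  have hVT : V.image (col f) = T' := by
    ext x
    constructor
    · intro hx
      obtain ⟨w, hw, rfl⟩ := Finset.mem_image.mp hx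
      obtain ⟨t, -, rfl⟩ := Finset.mem_image.mp hw
      rw [← hwt t]; exact t.2
    · intro hx
      refine Finset.mem_image.mpr ⟨wt ⟨x, hx⟩, ?_, (hwt ⟨x, hx⟩).symm⟩
      exact Finset.mem_image_of_mem wt (Finset.mem_univ _)
  refine ⟨⟨⟨W, V, hWne, hVne, hLam W, ?_⟩, fun Q _ => ⟨V, hVne, hLam Q⟩⟩,
          ⟨⟨W, V, hWne, hVne, hGam V, ?_⟩, fun T _ => ⟨W, hWne, hGam T⟩⟩⟩
  · show (Lambda f (W.image (row f)) Set.univ).Nonempty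
    rw [hWQ]
    exact ⟨lam, hlam⟩
  · show (Gamma f (V.image (col f)) Set.univ).Nonempty
    rw [hVT]
    exact ⟨gam, hgam⟩
end

section
/- Let f : Σ* → S and let T be a finite set of words such that the set of columns {[t] : t ∈ T} of the Hankel matrix of f is column-generating for f. Then Λ_{Q,T} = Λ_Q for every finite nonempty set of words Q. Consequently, every function that is weakly guessable and weakly co-guessable is uniformly strongly guessable: there is a single finite set of words T with Λ_{Q,T} = Λ_Q for all finite sets of words Q. -/
open scoped Classical

open LearnWA

lemma lambda_eq_of_colGen {σ S : Type} [Semiring S] (f : List σ → S) (T : Finset (List σ))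
    (hT : ColGenerating f (↑(T.image (col f)) : Set (List σ → S)))
    (QR : Finset (List σ → S)) (hQR : ∀ q ∈ QR, ∃ v, q = row f v) :
    Lambda f QR ↑T = Lambda f QR Set.univ := by
  apply Set.Subset.antisymm
  · rintro lam ⟨h1, h2⟩
    have hv : ∀ q : QR, ∃ v, (q : List σ → S) = row f v := fun q => hQR q q.2
    choose vq hvq using hv
    have hqw : ∀ (q : QR) (w : List σ), (q : List σ → S) w = col f w (vq q) := by
      intro q w; rw [hvq q]; rfl
    constructor
    · intro w _
      obtain ⟨F, c, hF, hc⟩ := hT w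
      have key : ∀ y ∈ F, y [] = ∑ q : QR, lam.1 q * y (vq q) := by
        intro y hy
        obtain ⟨t, ht, hcy⟩ := Finset.mem_image.mp (hF hy)
        subst hcy
        have : f t = ∑ q : QR, lam.1 q * (q : List σ → S) t := h1 t ht
        simpa [col, hqw] using this
      calc f w = col f w [] := rfl
        _ = ∑ y ∈ F, y [] * c y := hc []
        _ = ∑ y ∈ F, (∑ q : QR, lam.1 q * y (vq q)) * c y :=
            Finset.sum_congr rfl fun y hy => by rw [key y hy]
        _ = ∑ q : QR, lam.1 q * ∑ y ∈ F, y (vq q) * c y := by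
            simp only [Finset.sum_mul, Finset.mul_sum, mul_assoc]
            rw [Finset.sum_comm]
        _ = ∑ q : QR, lam.1 q * (q : List σ → S) w := by
            refine Finset.sum_congr rfl fun q _ => ?_
            rw [hqw q w, hc (vq q)]
    · intro q a w _
      obtain ⟨F, c, hF, hc⟩ := hT w
      have key : ∀ y ∈ F, y (vq q ++ [a]) = ∑ p : QR, lam.2 q a p * y (vq p) := by
        intro y hy
        obtain ⟨t, ht, hcy⟩ := Finset.mem_image.mp (hF hy)
        subst hcy
        have := h2 q a t ht
        simp only [hqw, col] at this ⊢
        simpa [List.append_assoc] using this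
      calc (q : List σ → S) (a :: w) = col f w (vq q ++ [a]) := by
            rw [hqw q (a :: w)]; simp [col, List.append_assoc]
        _ = ∑ y ∈ F, y (vq q ++ [a]) * c y := hc _
        _ = ∑ y ∈ F, (∑ p : QR, lam.2 q a p * y (vq p)) * c y :=
            Finset.sum_congr rfl fun y hy => by rw [key y hy]
        _ = ∑ p : QR, lam.2 q a p * ∑ y ∈ F, y (vq p) * c y := by
            simp only [Finset.sum_mul, Finset.mul_sum, mul_assoc]
            rw [Finset.sum_comm]
        _ = ∑ p : QR, lam.2 q a p * (p : List σ → S) w := by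
            refine Finset.sum_congr rfl fun p _ => ?_
            rw [hqw p w, hc (vq p)]
  · rintro lam ⟨h1, h2⟩
    exact ⟨fun t _ => h1 t trivial, fun q a t _ => h2 q a t trivial⟩

lemma colGen_of_gamma {σ S : Type} [Semiring S] (g : List σ → S) (Tf : Finset (List σ → S))
    (hne : (Gamma g Tf Set.univ).Nonempty) :
    ColGenerating g (↑Tf : Set (List σ → S)) := by
  obtain ⟨gam, g1, g2⟩ := hne
  have main : ∀ v : List σ, ∃ μ : {x // x ∈ Tf} → S,
      ∀ u, col g v u = ∑ t : {x // x ∈ Tf}, (t : List σ → S) u * μ t := by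
    intro v
    induction v with
    | nil => exact ⟨gam.1, fun u => by simpa [col] using g1 u trivial⟩
    | cons a w ih =>
        obtain ⟨μ, hμ⟩ := ih
        refine ⟨fun s => ∑ t : {x // x ∈ Tf}, gam.2 s a t * μ t, fun u => ?_⟩
        have h0 : col g (a :: w) u = col g w (u ++ [a]) := by
          simp [col, List.append_assoc]
        rw [h0, hμ (u ++ [a])]
        calc ∑ t : {x // x ∈ Tf}, (t : List σ → S) (u ++ [a]) * μ t
            = ∑ t : {x // x ∈ Tf}, (∑ s : {x // x ∈ Tf}, (s : List σ → S) u * gam.2 s a t) * μ t :=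
              Finset.sum_congr rfl fun t _ => by rw [g2 t a u trivial]
          _ = _ := by
              simp only [Finset.sum_mul, Finset.mul_sum, mul_assoc]
              rw [Finset.sum_comm]
  intro v
  obtain ⟨μ, hμ⟩ := main v
  refine ⟨Tf, fun y => if h : y ∈ Tf then μ ⟨y, h⟩ else 0, subset_rfl, fun u => ?_⟩
  rw [hμ u]
  rw [← Finset.sum_attach Tf (fun y => y u * if h : y ∈ Tf then μ ⟨y, h⟩ else 0)]
  exact Finset.sum_congr rfl fun t _ => by rw [dif_pos t.2]


theorem statement12 {σ S : Type} [Fintype σ] [Semiring S] (f : List σ → S)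
    (T : Finset (List σ))
    (hT : ColGenerating f (↑(T.image (col f)) : Set (List σ → S))) :
    (∀ Q : Finset (List σ), Q.Nonempty → LambdaW f Q ↑T = LambdaW f Q Set.univ) ∧
    (∀ g : List σ → S, WeaklyGuessable g → WeaklyCoGuessable g →
      Guessable g ∧ ∃ T' : Finset (List σ), T'.Nonempty ∧
        ∀ Q : Finset (List σ), Q.Nonempty →
          LambdaW g Q ↑T' = LambdaW g Q Set.univ) := by
  constructor
  · intro Q _
    exact lambda_eq_of_colGen f T hT (Q.image (row f))
      (fun q hq => by obtain ⟨v, _, rfl⟩ := Finset.mem_image.mp hq; exact ⟨v, rfl⟩)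
  · intro g hW hCo
    obtain ⟨Tf, hTne, hTcols, hGam⟩ := hCo
    choose wt hwt using hTcols
    set T' := Tf.attach.image (fun t => wt t.1 t.2) with hT'def
    have hT'ne : T'.Nonempty := by
      obtain ⟨t, ht⟩ := hTne
      exact ⟨wt t ht, Finset.mem_image.mpr ⟨⟨t, ht⟩, Finset.mem_attach _ _, rfl⟩⟩
    have hsub : ∀ x ∈ Tf, x ∈ T'.image (col g) := by
      intro x hx
      exact Finset.mem_image.mpr ⟨wt x hx,
        Finset.mem_image.mpr ⟨⟨x, hx⟩, Finset.mem_attach _ _, rfl⟩, (hwt x hx).symm⟩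
    have hcg : ColGenerating g (↑(T'.image (col g)) : Set (List σ → S)) := by
      intro v
      obtain ⟨F, c, hF, hc⟩ := colGen_of_gamma g Tf hGam v
      exact ⟨F, c, fun y hy => hsub y (hF hy), hc⟩
    have huni : ∀ Q : Finset (List σ), Q.Nonempty →
        LambdaW g Q ↑T' = LambdaW g Q Set.univ := by
      intro Q _
      exact lambda_eq_of_colGen g T' hcg (Q.image (row g))
        (fun q hq => by obtain ⟨v, _, rfl⟩ := Finset.mem_image.mp hq; exact ⟨v, rfl⟩)
    obtain ⟨Qf, hQne, hQrows, hLam⟩ := hW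
    choose wq hwq using hQrows
    set Q' := Qf.attach.image (fun q => wq q.1 q.2) with hQ'def
    have hQ'ne : Q'.Nonempty := by
      obtain ⟨q, hq⟩ := hQne
      exact ⟨wq q hq, Finset.mem_image.mpr ⟨⟨q, hq⟩, Finset.mem_attach _ _, rfl⟩⟩
    have himg : Q'.image (row g) = Qf := by
      apply Finset.ext; intro x
      constructor
      · intro hx
        obtain ⟨w, hw, rfl⟩ := Finset.mem_image.mp hx
        obtain ⟨q, _, rfl⟩ := Finset.mem_image.mp hw
        rw [← hwq q.1 q.2]; exact q.2
      · intro hx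
        exact Finset.mem_image.mpr ⟨wq x hx,
          Finset.mem_image.mpr ⟨⟨x, hx⟩, Finset.mem_attach _ _, rfl⟩, (hwq x hx).symm⟩
    have hLam' : (LambdaW g Q' Set.univ).Nonempty := by
      unfold LambdaW
      rw [himg]
      exact hLam
    exact ⟨⟨Q', T', hQ'ne, hT'ne, huni Q' hQ'ne, hLam'⟩, T', hT'ne, huni⟩
end

section
/- Every weakly guessable function f : Σ* → ℕ, over the semiring of natural numbers with usual addition and multiplication, is strongly row-bound; consequently every weakly guessable function over ℕ is strongly guessable. -/
open scoped Classical

open LearnWA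

set_option linter.unusedSectionVars false

namespace LearnWA
section Aux
variable {σ : Type} [Fintype σ] (f : List σ → ℕ) (Q : Finset (List σ → ℕ))

noncomputable def hat (lam : (↥Q → ℕ) × (↥Q → σ → ↥Q → ℕ)) :
    Option (↥Q ⊕ (↥Q × σ × ↥Q)) → ℚ
  | none => 1
  | some (Sum.inl q) => lam.1 q
  | some (Sum.inr z) => lam.2 z.1 z.2.1 z.2.2

noncomputable def evMap (lam : (↥Q → ℕ) × (↥Q → σ → ↥Q → ℕ)) :
    (Option (↥Q ⊕ (↥Q × σ × ↥Q)) → ℚ) →ₗ[ℚ] ℚ where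
  toFun u := ∑ o, u o * hat Q lam o
  map_add' u v := by simp [add_mul, Finset.sum_add_distrib]
  map_smul' c u := by simp [Finset.mul_sum, mul_assoc, mul_add]

noncomputable def vec (t : List σ) : (Unit ⊕ (↥Q × σ)) → Option (↥Q ⊕ (↥Q × σ × ↥Q)) → ℚ
  | Sum.inl _, none => -(f t : ℚ)
  | Sum.inl _, some (Sum.inl q) => ((q : List σ → ℕ) t : ℚ)
  | Sum.inl _, some (Sum.inr _) => 0
  | Sum.inr qa, none => -(((qa.1 : List σ → ℕ) (qa.2 :: t) : ℚ))
  | Sum.inr _, some (Sum.inl _) => 0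
  | Sum.inr qa, some (Sum.inr z) =>
      if z.1 = qa.1 ∧ z.2.1 = qa.2 then (((z.2.2 : List σ → ℕ) t : ℚ)) else 0

lemma sum_triple {α β : Type} [Fintype α] [Fintype β] (g : α → β → α → ℚ) (q : α) (a : β) :
    ∑ z : α × β × α, (if z.1 = q ∧ z.2.1 = a then g z.1 z.2.1 z.2.2 else 0) = ∑ p, g q a p := by
  classical
  rw [Fintype.sum_prod_type]
  rw [Finset.sum_eq_single q (fun b _ hb => by simp [hb]) (by simp)]
  rw [Fintype.sum_prod_type]
  rw [Finset.sum_eq_single a (fun b _ hb => by simp [hb]) (by simp)]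
  simp

lemma ev_vec_inl (t : List σ) (lam : (↥Q → ℕ) × (↥Q → σ → ↥Q → ℕ)) :
    evMap Q lam (vec f Q t (Sum.inl ())) =
      (∑ q : ↥Q, (lam.1 q : ℚ) * (q : List σ → ℕ) t) - f t := by
  simp only [evMap, LinearMap.coe_mk, AddHom.coe_mk, Fintype.sum_option,
    Fintype.sum_sum_type, vec, hat]
  rw [Finset.sum_congr rfl (fun q _ => mul_comm _ _)]
  ring_nf
  simp [mul_comm]

lemma ev_vec_inr (t : List σ) (q : ↥Q) (a : σ) (lam : (↥Q → ℕ) × (↥Q → σ → ↥Q → ℕ)) :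
    evMap Q lam (vec f Q t (Sum.inr (q, a))) =
      (∑ p : ↥Q, (lam.2 q a p : ℚ) * (p : List σ → ℕ) t) - (q : List σ → ℕ) (a :: t) := by
  simp only [evMap, LinearMap.coe_mk, AddHom.coe_mk, Fintype.sum_option,
    Fintype.sum_sum_type, vec, hat]
  have : ∀ z : ↥Q × σ × ↥Q,
      (if z.1 = q ∧ z.2.1 = a then (((z.2.2 : List σ → ℕ) t : ℚ)) else 0) *
        (lam.2 z.1 z.2.1 z.2.2 : ℚ) =
      if z.1 = q ∧ z.2.1 = a then ((z.2.2 : List σ → ℕ) t : ℚ) * lam.2 z.1 z.2.1 z.2.2 else 0 := by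
    intro z; split_ifs <;> simp
  rw [Finset.sum_congr rfl (fun z _ => this z)]
  have key : (∑ z : ↥Q × σ × ↥Q,
      if z.1 = q ∧ z.2.1 = a then (((z.2.2 : List σ → ℕ) t : ℚ)) * (lam.2 z.1 z.2.1 z.2.2 : ℚ) else 0)
      = ∑ p : ↥Q, (((p : List σ → ℕ) t : ℚ)) * (lam.2 q a p : ℚ) := by
    rw [Fintype.sum_prod_type]
    rw [Finset.sum_eq_single q (fun b _ hb => by simp [hb]) (by simp)]
    rw [Fintype.sum_prod_type]
    rw [Finset.sum_eq_single a (fun b _ hb => by simp [hb]) (by simp)]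
    simp
  rw [key]
  rw [Finset.sum_congr (rfl : (Finset.univ : Finset ↥Q) = _) (fun p _ => mul_comm ((p : List σ → ℕ) t : ℚ) (lam.2 q a p : ℚ))]
  ring_nf
  simp

lemma mem_lambda_iff (T : Set (List σ)) (lam : (↥Q → ℕ) × (↥Q → σ → ↥Q → ℕ)) :
    lam ∈ Lambda f Q T ↔ ∀ t ∈ T, ∀ j : Unit ⊕ (↥Q × σ), evMap Q lam (vec f Q t j) = 0 := by
  constructor
  · rintro ⟨h1, h2⟩ t ht j
    rcases j with _ | ⟨q, a⟩
    · rw [ev_vec_inl, sub_eq_zero, h1 t ht]; push_cast; ring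
    · rw [ev_vec_inr, sub_eq_zero, h2 q a t ht]; push_cast; ring
  · intro hev
    constructor
    · intro t ht
      have h0 := hev t ht (Sum.inl ())
      rw [ev_vec_inl, sub_eq_zero] at h0
      exact_mod_cast h0.symm
    · intro q a t ht
      have h0 := hev t ht (Sum.inr (q, a))
      rw [ev_vec_inr, sub_eq_zero] at h0
      exact_mod_cast h0.symm

lemma lambda_antitone {T T' : Set (List σ)} (h : T ⊆ T') :
    Lambda f Q T' ⊆ Lambda f Q T :=
  fun _lam hl => ⟨fun t ht => hl.1 t (h ht), fun q a t ht => hl.2 q a t (h ht)⟩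

lemma core (T : ℕ → Set (List σ)) (hT : Monotone T) :
    ∃ n, ∀ m, n ≤ m → Lambda f Q (T n) ⊆ Lambda f Q (T m) := by
  set W : ℕ →o Submodule ℚ (Option (↥Q ⊕ (↥Q × σ × ↥Q)) → ℚ) :=
    ⟨fun i => Submodule.span ℚ {u | ∃ t ∈ T i, ∃ j, u = vec f Q t j},
     fun i j hij => Submodule.span_mono
       (by rintro u ⟨t, ht, j', rfl⟩; exact ⟨t, hT hij ht, j', rfl⟩)⟩ with hW
  obtain ⟨n, hn⟩ := monotone_stabilizes_iff_noetherian.mpr inferInstance W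
  refine ⟨n, fun m hm lam hlam => ?_⟩
  rw [mem_lambda_iff] at hlam ⊢
  intro t ht j
  have hker : W n ≤ LinearMap.ker (evMap Q lam) := by
    rw [hW]
    show Submodule.span ℚ {u | ∃ t ∈ T n, ∃ j, u = vec f Q t j} ≤ _
    rw [Submodule.span_le]
    rintro u ⟨t', ht', j', rfl⟩
    exact LinearMap.mem_ker.mpr (hlam t' ht' j')
  have hv : vec f Q t j ∈ W m := Submodule.subset_span ⟨t, ht, j, rfl⟩
  rw [← hn m hm] at hv
  exact LinearMap.mem_ker.mp (hker hv)

lemma finiteT : ∃ T : Finset (List σ), T.Nonempty ∧ Lambda f Q ↑T = Lambda f Q Set.univ := by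
  obtain ⟨g, hg⟩ := exists_surjective_nat (List σ)
  set T : ℕ → Finset (List σ) := fun i => (Finset.range (i + 1)).image g with hTdef
  have hmono : Monotone fun i => (↑(T i) : Set (List σ)) := by
    intro i j hij
    exact Finset.coe_subset.mpr
      (Finset.image_subset_image (Finset.range_subset_range.mpr (by omega)))
  obtain ⟨n, hn⟩ := core f Q _ hmono
  refine ⟨T n, ⟨g 0, Finset.mem_image.mpr ⟨0, by simp, rfl⟩⟩, ?_⟩
  apply Set.Subset.antisymm
  · intro lam hl
    rw [mem_lambda_iff]
    intro t _ j
    obtain ⟨m, rfl⟩ := hg t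
    have h2 := hn (max n m) (le_max_left _ _) hl
    rw [mem_lambda_iff] at h2
    exact h2 (g m) (by simp [hTdef]; exact ⟨m, by omega, rfl⟩) j
  · exact lambda_antitone f Q (Set.subset_univ _)

end Aux
end LearnWA

open LearnWA in
theorem statement14 {σ : Type} [Fintype σ] (f : List σ → ℕ)
    (h : WeaklyGuessable f) :
    StronglyRowBound f ∧ StronglyGuessable f := by
  constructor
  · intro Q _hQ T hchain
    obtain ⟨hmonoT, _hcov, hstrict⟩ := hchain
    obtain ⟨n, hn⟩ := core f (Q.image (row f)) T (monotone_nat_of_le_succ hmonoT)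
    exact (hstrict n).not_subset (hn (n + 1) (by omega))
  · constructor
    · obtain ⟨Qr, hne, hrows, hlam⟩ := h
      set w : (List σ → ℕ) → List σ :=
        fun q => if hq : ∃ v, q = row f v then hq.choose else [] with hwdef
      have hw : ∀ q ∈ Qr, row f (w q) = q := by
        intro q hq
        obtain ⟨v, hv⟩ := hrows q hq
        rw [hwdef]
        simp only []
        rw [dif_pos ⟨v, hv⟩]
        exact ((⟨v, hv⟩ : ∃ v, q = row f v).choose_spec).symm
      set Q' := Qr.image w with hQ'
      have himg : Q'.image (row f) = Qr := by
        rw [hQ', Finset.image_image]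
        calc Qr.image (row f ∘ w) = Qr.image id := Finset.image_congr (fun q hq => hw q hq)
          _ = Qr := Finset.image_id
      obtain ⟨T, hTne, hTeq⟩ := finiteT f (Q'.image (row f))
      refine ⟨Q', T, hne.image w, hTne, hTeq, ?_⟩
      show (Lambda f (Q'.image (row f)) Set.univ).Nonempty
      rw [himg]; exact hlam
    · intro Q _hQ
      obtain ⟨T, hTne, hTeq⟩ := finiteT f (Q.image (row f))
      exact ⟨T, hTne, hTeq⟩
end

section
/- Let S' be a subsemiring of a semiring S. If every weakly guessable function Σ* → S is strongly guessable, then every weakly guessable function Σ* → S' is strongly guessable (where guessability over S' is defined with all coefficients, linear combinations and solution sets taken over S'). -/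
open scoped Classical

open LearnWA

section Aux

variable {σ S : Type} [Semiring S]

/-- Inclusion of `S'`-valued functions into `S`-valued functions. -/
def sIota (S' : Subsemiring S) : (List σ → S') → (List σ → S) :=
  fun q w => (q w : S)

lemma sIota_injective (S' : Subsemiring S) :
    Function.Injective (sIota (σ := σ) S') :=
  fun a b hab => funext fun w => Subtype.ext (congrFun hab w)

/-- The canonical equivalence between `Q` and its image under `sIota`. -/
noncomputable def eQ (S' : Subsemiring S) (Q : Finset (List σ → S')) :
    {x // x ∈ Q} ≃ {y // y ∈ Q.image (sIota S')} :=
  Equiv.ofBijective (fun x => ⟨sIota S' x.1, Finset.mem_image_of_mem _ x.2⟩)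
    ⟨fun x y hxy => Subtype.ext (sIota_injective S' (congrArg Subtype.val hxy)),
     fun y => by
       obtain ⟨x, hx, hxy⟩ := Finset.mem_image.mp y.2
       exact ⟨⟨x, hx⟩, Subtype.ext hxy⟩⟩

lemma eQ_apply_coe (S' : Subsemiring S) (Q : Finset (List σ → S')) (q : {x // x ∈ Q}) :
    ((eQ S' Q q : {y // y ∈ Q.image (sIota S')}) : List σ → S) = sIota S' q := rfl

/-- The image of a solution vector under the inclusion. -/
noncomputable def mapLam (S' : Subsemiring S) (Q : Finset (List σ → S'))
    (lam : ({x // x ∈ Q} → S') × ({x // x ∈ Q} → σ → {x // x ∈ Q} → S')) :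
    ({y // y ∈ Q.image (sIota S')} → S) ×
      ({y // y ∈ Q.image (sIota S')} → σ → {y // y ∈ Q.image (sIota S')} → S) :=
  ⟨fun p => (lam.1 ((eQ S' Q).symm p) : S),
   fun p a p' => (lam.2 ((eQ S' Q).symm p) a ((eQ S' Q).symm p') : S)⟩

lemma mapLam_sum (S' : Subsemiring S) (Q : Finset (List σ → S'))
    (c : {x // x ∈ Q} → S') (t : List σ) :
    (∑ p : {y // y ∈ Q.image (sIota S')}, (c ((eQ S' Q).symm p) : S) * (p : List σ → S) t)
      = ((∑ q : {x // x ∈ Q}, c q * (q : List σ → S') t : S') : S) := by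
  rw [← Equiv.sum_comp (eQ S' Q)
    (fun p => (c ((eQ S' Q).symm p) : S) * (p : List σ → S) t)]
  push_cast
  refine Finset.sum_congr rfl fun q _ => ?_
  rw [Equiv.symm_apply_apply, eQ_apply_coe]
  rfl

lemma mem_lambda_iff (S' : Subsemiring S) (f : List σ → S') (Q : Finset (List σ → S'))
    (T : Set (List σ))
    (lam : ({x // x ∈ Q} → S') × ({x // x ∈ Q} → σ → {x // x ∈ Q} → S')) :
    lam ∈ Lambda f Q T ↔
      mapLam S' Q lam ∈ Lambda (fun w => (f w : S)) (Q.image (sIota S')) T := by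
  simp only [Lambda, Set.mem_setOf_eq, mapLam]
  constructor
  · rintro ⟨h1, h2⟩
    constructor
    · intro t ht
      rw [mapLam_sum, ← h1 t ht]
    · intro q' a t ht
      obtain ⟨q, rfl⟩ := (eQ S' Q).surjective q'
      rw [eQ_apply_coe]
      have := h2 q a t ht
      rw [mapLam_sum S' Q (fun p => lam.2 ((eQ S' Q).symm (eQ S' Q q)) a p) t]
      simp only [Equiv.symm_apply_apply]
      rw [← this]
      rfl
  · rintro ⟨h1, h2⟩
    constructor
    · intro t ht
      have := h1 t ht
      rw [mapLam_sum] at this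
      exact Subtype.ext this
    · intro q a t ht
      have := h2 (eQ S' Q q) a t ht
      rw [eQ_apply_coe,
        mapLam_sum S' Q (fun p => lam.2 ((eQ S' Q).symm (eQ S' Q q)) a p) t] at this
      simp only [Equiv.symm_apply_apply] at this
      exact Subtype.ext this

lemma lambda_antitone (f : List σ → S) (Q : Finset (List σ → S))
    {T T' : Set (List σ)} (hTT : T ⊆ T') :
    Lambda f Q T' ⊆ Lambda f Q T := by
  rintro lam ⟨h1, h2⟩
  exact ⟨fun t ht => h1 t (hTT ht), fun q a t ht => h2 q a t (hTT ht)⟩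

end Aux

theorem statement15 {σ S : Type} [Fintype σ] [Semiring S] (S' : Subsemiring S)
    (h : ∀ g : List σ → S, WeaklyGuessable g → StronglyGuessable g)
    (f : List σ → S') (hf : WeaklyGuessable f) :
    StronglyGuessable f := by
  classical
  set g : List σ → S := fun w => (f w : S) with hgdef
  obtain ⟨Q, hQne, hQrows, lam, hlam⟩ := hf
  -- g is weakly guessable over S
  have hwg : WeaklyGuessable g := by
    refine ⟨Q.image (sIota S'), hQne.image _, ?_,
      ⟨mapLam S' Q lam, (mem_lambda_iff S' f Q Set.univ lam).mp hlam⟩⟩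
    intro q' hq'
    obtain ⟨q, hq, rfl⟩ := Finset.mem_image.mp hq'
    obtain ⟨w, rfl⟩ := hQrows q hq
    exact ⟨w, rfl⟩
  obtain ⟨-, hstrong⟩ := h g hwg
  -- main claim: the second clause of strong guessability for f
  have main : ∀ W : Finset (List σ), W.Nonempty →
      ∃ T : Finset (List σ), T.Nonempty ∧ LambdaW f W ↑T = LambdaW f W Set.univ := by
    intro W hW
    obtain ⟨T, hTne, hT⟩ := hstrong W hW
    refine ⟨T, hTne, ?_⟩
    have himg : (W.image (row f)).image (sIota S') = W.image (row g) := by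
      rw [Finset.image_image]; rfl
    simp only [LambdaW] at hT ⊢
    rw [← himg] at hT
    apply Set.Subset.antisymm
    · intro lam' hlam'
      have h1 := (mem_lambda_iff S' f (W.image (row f)) ↑T lam').mp hlam'
      rw [hT] at h1
      exact (mem_lambda_iff S' f (W.image (row f)) Set.univ lam').mpr h1
    · exact lambda_antitone f (W.image (row f)) (Set.subset_univ _)
  -- a set of words whose rows are exactly Q
  have hWex : ∃ W : Finset (List σ), W.Nonempty ∧ (LambdaW f W Set.univ).Nonempty := by
    refine ⟨Q.attach.image (fun q => Classical.choose (hQrows q.1 q.2)), ?_, ?_⟩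
    · exact (Finset.attach_nonempty_iff.mpr hQne).image _
    · have himg : ((Q.attach.image fun q => Classical.choose (hQrows q.1 q.2)).image (row f))
          = Q := by
        apply Finset.Subset.antisymm
        · intro x hx
          obtain ⟨w, hw, rfl⟩ := Finset.mem_image.mp hx
          obtain ⟨q, -, rfl⟩ := Finset.mem_image.mp hw
          rw [← Classical.choose_spec (hQrows q.1 q.2)]
          exact q.2
        · intro q hq
          exact Finset.mem_image.mpr ⟨_, Finset.mem_image.mpr
            ⟨⟨q, hq⟩, Finset.mem_attach _ _, rfl⟩, (Classical.choose_spec (hQrows q hq)).symm⟩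
      simp only [LambdaW]
      rw [himg]
      exact ⟨lam, hlam⟩
  obtain ⟨W, hWne, hWlam⟩ := hWex
  obtain ⟨T, hTne, hTeq⟩ := main W hWne
  exact ⟨⟨W, T, hWne, hTne, hTeq, hWlam⟩, main⟩
end
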